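/- arXiv:1205.0375 — 9 statements merged into one kernel-verified Lean document; each statement's English description precedes it below -/
import Mathlib

section
/- Let m, M be real numbers with m < 0 < M, and let f : [0,1] → ℝ be an essentially bounded measurable function satisfying m ≤ f(x) ≤ M for almost every x in [0,1] and ∫₀¹ f(x) dx = 0. Then for every x in [0,1], the function J(f) defined by J(f)(x) = ∫₀ˣ f(t) dt satisfies J(f)(x) ≤ -mM/(M-m). -/
open MeasureTheory Set

theorem integral_le_of_mem_F (m M : ℝ) (hm : m < 0) (hM : 0 < M)
    (f : ℝ → ℝ) (hmeas : Measurable f)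
    (hbound : ∀ᵐ x ∂(volume.restrict (Icc (0:ℝ) 1)), f x ∈ Icc m M)
    (hint : ∫ x in (0:ℝ)..1, f x = 0)
    (x : ℝ) (hx : x ∈ Icc (0:ℝ) 1) :
    (∫ t in (0:ℝ)..x, f t) ≤ -m * M / (M - m) := by
  obtain ⟨hx0, hx1⟩ := hx
  have hMm : (0:ℝ) < M - m := by linarith
  -- integrability on Icc 0 1
  have hInt : IntegrableOn f (Icc (0:ℝ) 1) volume := by
    apply Integrable.mono' (integrable_const (max (-m) M))
      (hmeas.aestronglyMeasurable.restrict)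
    filter_upwards [hbound] with t ht
    rw [Real.norm_eq_abs, abs_le]
    constructor
    · have := ht.1
      have : -(max (-m) M) ≤ m := by
        have := le_max_left (-m) M
        linarith
      linarith [ht.1]
    · exact le_trans ht.2 (le_max_right _ _)
  have key : ∀ a b : ℝ, 0 ≤ a → a ≤ b → b ≤ 1 →
      IntervalIntegrable f volume a b ∧
      (∫ t in a..b, f t) ≤ M * (b - a) ∧ m * (b - a) ≤ ∫ t in a..b, f t := by
    intro a b ha hab hb1
    have hsub : Icc a b ⊆ Icc (0:ℝ) 1 := Icc_subset_Icc ha hb1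
    have hfi : IntervalIntegrable f volume a b := by
      rw [intervalIntegrable_iff_integrableOn_Icc_of_le hab]
      exact hInt.mono_set hsub
    have hae : ∀ᵐ t ∂(volume.restrict (Icc a b)), f t ∈ Icc m M :=
      ae_restrict_of_ae_restrict_of_subset hsub hbound
    refine ⟨hfi, ?_, ?_⟩
    · have := intervalIntegral.integral_mono_ae_restrict hab hfi
        (intervalIntegrable_const (c := M)) (by filter_upwards [hae] with t ht; exact ht.2)
      simpa [mul_comm] using this
    · have := intervalIntegral.integral_mono_ae_restrict hab
        (intervalIntegrable_const (c := m)) hfi (by filter_upwards [hae] with t ht; exact ht.1)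
      simpa [mul_comm] using this
  obtain ⟨hfi1, hup, _⟩ := key 0 x le_rfl hx0 hx1
  obtain ⟨hfi2, _, hlow⟩ := key x 1 hx0 hx1 le_rfl
  have hsplit : (∫ t in (0:ℝ)..x, f t) + (∫ t in x..1, f t) = 0 := by
    rw [intervalIntegral.integral_add_adjacent_intervals hfi1 hfi2]
    exact hint
  set F := ∫ t in (0:ℝ)..x, f t with hF
  have h1 : F ≤ M * x := by simpa using hup
  have h2 : F ≤ -m * (1 - x) := by
    have : F = -(∫ t in x..1, f t) := by linarith
    rw [this]
    linarith [hlow]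
  rw [le_div_iff₀ hMm]
  nlinarith [mul_le_mul_of_nonneg_left h2 hM.le,
    mul_le_mul_of_nonneg_left h1 (by linarith : (0:ℝ) ≤ -m)]
end

section
/- Let m, M be real numbers with m < 0 < M, let f ∈ F_{m,M}, and let φ be a nonnegative monotone increasing function on [0, -mM/(M-m)]. Then ∫₀¹ φ(|J(f)(x)|) dx ≤ K(φ, -mM/(M-m)), where K(φ,t) = (1/t)∫₀ᵗ φ(x) dx. -/
open MeasureTheory Set


/-- Crossing lemma: a continuous function going from `≥ σ` to `≤ -σ` has a clean
downward crossing interval on which `|g| < σ` strictly inside. -/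
lemma crossing_lemma (g : ℝ → ℝ) (hg : ContinuousOn g (Icc 0 1))
    (u v : ℝ) (hu : u ∈ Icc (0:ℝ) 1) (hv : v ∈ Icc (0:ℝ) 1) (huv : u < v)
    (σ : ℝ) (hσ : 0 < σ) (hgu : σ ≤ g u) (hgv : g v ≤ -σ) :
    ∃ a b, a ∈ Icc u v ∧ b ∈ Icc u v ∧ a < b ∧ σ ≤ g a ∧ g b ≤ -σ ∧
      ∀ x ∈ Ioo a b, |g x| < σ := by
  have hsub : Icc u v ⊆ Icc (0:ℝ) 1 := Icc_subset_Icc hu.1 hv.2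
  have hgc : ContinuousOn g (Icc u v) := hg.mono hsub
  set S : Set ℝ := Icc u v ∩ g ⁻¹' (Ici σ) with hS
  have hS_closed : IsClosed S := hgc.preimage_isClosed_of_isClosed isClosed_Icc isClosed_Ici
  have hSu : u ∈ S := ⟨⟨le_rfl, huv.le⟩, hgu⟩
  have hSbdd : BddAbove S := ⟨v, fun x hx => hx.1.2⟩
  set a := sSup S with ha
  have haS : a ∈ S := hS_closed.csSup_mem ⟨u, hSu⟩ hSbdd
  have hav : a < v := lt_of_le_of_ne haS.1.2 (by
    intro h; rw [h] at haS; have := haS.2; simp only [mem_preimage, mem_Ici] at this; linarith)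
  set S2 : Set ℝ := Icc a v ∩ g ⁻¹' (Iic (-σ)) with hS2
  have hS2_closed : IsClosed S2 :=
    (hgc.mono (Icc_subset_Icc haS.1.1 le_rfl)).preimage_isClosed_of_isClosed isClosed_Icc
      isClosed_Iic
  have hS2v : v ∈ S2 := ⟨⟨hav.le, le_rfl⟩, hgv⟩
  have hS2bdd : BddBelow S2 := ⟨a, fun x hx => hx.1.1⟩
  set b := sInf S2 with hb
  have hbS : b ∈ S2 := hS2_closed.csInf_mem ⟨v, hS2v⟩ hS2bdd
  have hga : σ ≤ g a := haS.2
  have hgb : g b ≤ -σ := hbS.2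
  have hab : a < b := lt_of_le_of_ne hbS.1.1 (by
    intro h; rw [← h] at hgb; linarith)
  refine ⟨a, b, ⟨haS.1.1, haS.1.2⟩, ⟨le_trans haS.1.1 hbS.1.1, hbS.1.2⟩, hab, hga, hgb, ?_⟩
  intro x hx
  have hxuv : x ∈ Icc u v := ⟨le_trans haS.1.1 hx.1.le, le_trans hx.2.le hbS.1.2⟩
  have h1 : g x < σ := by
    by_contra h
    push_neg at h
    have : x ∈ S := ⟨hxuv, h⟩
    have := le_csSup hSbdd this
    linarith [hx.1]
  have h2 : -σ < g x := by
    by_contra h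
    push_neg at h
    have : x ∈ S2 := ⟨⟨hx.1.le, hxuv.2⟩, h⟩
    have := csInf_le hS2bdd this
    linarith [hx.2]
  rw [abs_lt]; exact ⟨by linarith, h1⟩

lemma vol_union2 (A : Set ℝ) {p q r t c : ℝ} (h : A ⊆ Icc p q ∪ Icc r t)
    (hpq : p ≤ q) (hrt : r ≤ t) (hc : (q - p) + (t - r) ≤ c) :
    volume A ≤ ENNReal.ofReal c := by
  calc volume A ≤ volume (Icc p q ∪ Icc r t) := measure_mono h
    _ ≤ volume (Icc p q) + volume (Icc r t) := measure_union_le _ _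
    _ = ENNReal.ofReal ((q - p) + (t - r)) := by
        rw [Real.volume_Icc, Real.volume_Icc, ENNReal.ofReal_add (by linarith) (by linarith)]
    _ ≤ ENNReal.ofReal c := ENNReal.ofReal_le_ofReal hc

lemma vol_union3 (A : Set ℝ) {p q r t w z c : ℝ} (h : A ⊆ Icc p q ∪ Icc r t ∪ Icc w z)
    (hpq : p ≤ q) (hrt : r ≤ t) (hwz : w ≤ z)
    (hc : (q - p) + (t - r) + (z - w) ≤ c) :
    volume A ≤ ENNReal.ofReal c := by
  calc volume A ≤ volume (Icc p q ∪ Icc r t ∪ Icc w z) := measure_mono h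
    _ ≤ volume (Icc p q ∪ Icc r t) + volume (Icc w z) := measure_union_le _ _
    _ ≤ volume (Icc p q) + volume (Icc r t) + volume (Icc w z) :=
        add_le_add_left (measure_union_le _ _) _
    _ = ENNReal.ofReal ((q - p) + (t - r) + (z - w)) := by
        rw [Real.volume_Icc, Real.volume_Icc, Real.volume_Icc,
          ← ENNReal.ofReal_add (by linarith) (by linarith),
          ← ENNReal.ofReal_add (by linarith) (by linarith)]
    _ ≤ ENNReal.ofReal c := ENNReal.ofReal_le_ofReal hc

lemma gap_subset {A : Set ℝ} (hA : A ⊆ Icc 0 1) {a1 b1 a2 b2 : ℝ} (h12 : b1 ≤ a2)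
    (hg1 : ∀ x ∈ Ioo a1 b1, x ∉ A) (hg2 : ∀ x ∈ Ioo a2 b2, x ∉ A) :
    A ⊆ Icc 0 a1 ∪ Icc b1 a2 ∪ Icc b2 1 := by
  intro x hx
  have h01 := hA hx
  rcases le_or_gt x a1 with h | h
  · exact Or.inl (Or.inl ⟨h01.1, h⟩)
  · have hb1 : b1 ≤ x := by
      by_contra hh; push_neg at hh; exact hg1 x ⟨h, hh⟩ hx
    rcases le_or_gt x a2 with h2 | h2
    · exact Or.inl (Or.inr ⟨hb1, h2⟩)
    · have hb2 : b2 ≤ x := by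
        by_contra hh; push_neg at hh; exact hg2 x ⟨h2, hh⟩ hx
      exact Or.inr ⟨hb2, h01.2⟩

lemma distrib_bound (m M : ℝ) (hm : m < 0) (hM : 0 < M) (F : ℝ → ℝ)
    (hFc : ContinuousOn F (Icc 0 1))
    (hup : ∀ x ∈ Icc (0:ℝ) 1,
      F x ≤ M * x ∧ m * x ≤ F x ∧ F x ≤ -m * (1 - x) ∧ -M * (1 - x) ≤ F x)
    (hsl : ∀ a b, a ∈ Icc (0:ℝ) 1 → b ∈ Icc (0:ℝ) 1 → a ≤ b →
      m * (b - a) ≤ F b - F a ∧ F b - F a ≤ M * (b - a))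
    (σ : ℝ) (hσ : 0 < σ) :
    volume {x ∈ Icc (0:ℝ) 1 | σ ≤ |F x|} ≤ ENNReal.ofReal (1 - σ / M - σ / (-m)) := by
  have hm' : (0:ℝ) < -m := by linarith
  set α := σ / M with hαdef
  set β := σ / (-m) with hβdef
  have hα : 0 < α := div_pos hσ hM
  have hβ : 0 < β := div_pos hσ hm'
  have hαM : α * M = σ := div_mul_cancel₀ σ (ne_of_gt hM)
  have hβm : β * (-m) = σ := div_mul_cancel₀ σ (ne_of_gt hm')
  set A := {x ∈ Icc (0:ℝ) 1 | σ ≤ |F x|} with hAdef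
  have hA01 : A ⊆ Icc (0:ℝ) 1 := fun x hx => hx.1
  have hAmem : ∀ x ∈ A, σ ≤ F x ∨ F x ≤ -σ := by
    intro x hx
    rcases le_abs.mp hx.2 with h | h
    · exact Or.inl h
    · exact Or.inr (by linarith)
  -- positive / negative location facts
  have hpos : ∀ x ∈ Icc (0:ℝ) 1, σ ≤ F x → α ≤ x ∧ x ≤ 1 - β := by
    intro x hx hFx
    obtain ⟨h1, _, h3, _⟩ := hup x hx
    constructor
    · nlinarith
    · nlinarith
  have hneg : ∀ x ∈ Icc (0:ℝ) 1, F x ≤ -σ → β ≤ x ∧ x ≤ 1 - α := by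
    intro x hx hFx
    obtain ⟨_, h2, _, h4⟩ := hup x hx
    constructor
    · nlinarith
    · nlinarith
  -- gap length facts
  have hdownlen : ∀ a b, a ∈ Icc (0:ℝ) 1 → b ∈ Icc (0:ℝ) 1 → a ≤ b →
      σ ≤ F a → F b ≤ -σ → 2 * β ≤ b - a := by
    intro a b ha hb hab hFa hFb
    have := (hsl a b ha hb hab).1
    nlinarith
  have huplen : ∀ a b, a ∈ Icc (0:ℝ) 1 → b ∈ Icc (0:ℝ) 1 → a ≤ b →
      F a ≤ -σ → σ ≤ F b → 2 * α ≤ b - a := by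
    intro a b ha hb hab hFa hFb
    have := (hsl a b ha hb hab).2
    nlinarith
  -- up-crossing version of the crossing lemma
  have upcross : ∀ u v, u ∈ Icc (0:ℝ) 1 → v ∈ Icc (0:ℝ) 1 → u < v →
      F u ≤ -σ → σ ≤ F v →
      ∃ a b, a ∈ Icc u v ∧ b ∈ Icc u v ∧ a < b ∧ F a ≤ -σ ∧ σ ≤ F b ∧
        ∀ x ∈ Ioo a b, |F x| < σ := by
    intro u v hu hv huv hFu hFv
    obtain ⟨a, b, ha, hb, hab, h1, h2, h3⟩ :=
      crossing_lemma (fun x => -F x) hFc.neg u v hu hv huv σ hσ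
        (show σ ≤ -F u by linarith) (show -F v ≤ -σ by linarith)
    have h1' : σ ≤ -F a := h1
    have h2' : -F b ≤ -σ := h2
    exact ⟨a, b, ha, hb, hab, by linarith, by linarith,
      fun x hx => by simpa [abs_neg] using h3 x hx⟩
  by_cases hP : ∃ p ∈ Icc (0:ℝ) 1, σ ≤ F p
  · by_cases hQ : ∃ q ∈ Icc (0:ℝ) 1, F q ≤ -σ
    · obtain ⟨p, hp, hFp⟩ := hP
      obtain ⟨q, hq, hFq⟩ := hQ
      by_cases hU : ∃ x1 ∈ Icc (0:ℝ) 1, ∃ x2 ∈ Icc (0:ℝ) 1, F x1 ≤ -σ ∧ σ ≤ F x2 ∧ x1 < x2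
      · by_cases hD : ∃ y1 ∈ Icc (0:ℝ) 1, ∃ y2 ∈ Icc (0:ℝ) 1, σ ≤ F y1 ∧ F y2 ≤ -σ ∧ y1 < y2
        · -- both an up pair and a down pair: two disjoint crossings
          obtain ⟨x1, hx1, x2, hx2, hFx1, hFx2, hx12⟩ := hU
          obtain ⟨y1, hy1, y2, hy2, hFy1, hFy2, hy12⟩ := hD
          have main : ∃ a1 b1 a2 b2, a1 ∈ Icc (0:ℝ) 1 ∧ b1 ∈ Icc (0:ℝ) 1 ∧
              a2 ∈ Icc (0:ℝ) 1 ∧ b2 ∈ Icc (0:ℝ) 1 ∧ a1 < b1 ∧ b1 ≤ a2 ∧ a2 < b2 ∧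
              2 * α + 2 * β ≤ (b1 - a1) + (b2 - a2) ∧
              (∀ x ∈ Ioo a1 b1, |F x| < σ) ∧ (∀ x ∈ Ioo a2 b2, |F x| < σ) := by
            rcases lt_trichotomy x2 y2 with h | h | h
            · -- up crossing in [x1,x2], down crossing in [x2,y2]
              obtain ⟨a1, b1, ha1, hb1, hab1, hFa1, hFb1, hgap1⟩ :=
                upcross x1 x2 hx1 hx2 hx12 hFx1 hFx2
              have ha1' : a1 ∈ Icc (0:ℝ) 1 := Icc_subset_Icc hx1.1 hx2.2 ha1
              have hb1' : b1 ∈ Icc (0:ℝ) 1 := Icc_subset_Icc hx1.1 hx2.2 hb1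
              obtain ⟨a2, b2, ha2, hb2, hab2, hFa2, hFb2, hgap2⟩ :=
                crossing_lemma F hFc x2 y2 hx2 hy2 h σ hσ hFx2 hFy2
              have ha2' : a2 ∈ Icc (0:ℝ) 1 := Icc_subset_Icc hx2.1 hy2.2 ha2
              have hb2' : b2 ∈ Icc (0:ℝ) 1 := Icc_subset_Icc hx2.1 hy2.2 hb2
              have l1 := huplen a1 b1 ha1' hb1' hab1.le hFa1 hFb1
              have l2 := hdownlen a2 b2 ha2' hb2' hab2.le hFa2 hFb2
              exact ⟨a1, b1, a2, b2, ha1', hb1', ha2', hb2', hab1,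
                le_trans hb1.2 ha2.1, hab2, by linarith, hgap1, hgap2⟩
            · exfalso; rw [h] at hFx2; linarith
            · -- down crossing in [y1,y2], up crossing in [y2,x2]
              obtain ⟨a1, b1, ha1, hb1, hab1, hFa1, hFb1, hgap1⟩ :=
                crossing_lemma F hFc y1 y2 hy1 hy2 hy12 σ hσ hFy1 hFy2
              have ha1' : a1 ∈ Icc (0:ℝ) 1 := Icc_subset_Icc hy1.1 hy2.2 ha1
              have hb1' : b1 ∈ Icc (0:ℝ) 1 := Icc_subset_Icc hy1.1 hy2.2 hb1
              obtain ⟨a2, b2, ha2, hb2, hab2, hFa2, hFb2, hgap2⟩ :=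
                upcross y2 x2 hy2 hx2 h hFy2 hFx2
              have ha2' : a2 ∈ Icc (0:ℝ) 1 := Icc_subset_Icc hy2.1 hx2.2 ha2
              have hb2' : b2 ∈ Icc (0:ℝ) 1 := Icc_subset_Icc hy2.1 hx2.2 hb2
              have l1 := hdownlen a1 b1 ha1' hb1' hab1.le hFa1 hFb1
              have l2 := huplen a2 b2 ha2' hb2' hab2.le hFa2 hFb2
              exact ⟨a1, b1, a2, b2, ha1', hb1', ha2', hb2', hab1,
                le_trans hb1.2 ha2.1, hab2, by linarith, hgap1, hgap2⟩
          obtain ⟨a1, b1, a2, b2, ha1, hb1, ha2, hb2, hab1, h12, hab2, hlen, hg1, hg2⟩ := main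
          have hsub := gap_subset hA01 h12
            (fun x hx hxA => absurd hxA.2 (not_le.2 (hg1 x hx)))
            (fun x hx hxA => absurd hxA.2 (not_le.2 (hg2 x hx)))
          exact vol_union3 A hsub ha1.1 h12 (by linarith [hb2.2, hab2.le]) (by linarith [hb2.2])
        · -- up pair but no down pair
          push_neg at hD
          obtain ⟨x1, hx1, x2, hx2, hFx1, hFx2, hx12⟩ := hU
          obtain ⟨a, b, ha, hb, hab, hFa, hFb, hgap⟩ :=
            upcross x1 x2 hx1 hx2 hx12 hFx1 hFx2
          have ha' : a ∈ Icc (0:ℝ) 1 := Icc_subset_Icc hx1.1 hx2.2 ha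
          have hb' : b ∈ Icc (0:ℝ) 1 := Icc_subset_Icc hx1.1 hx2.2 hb
          have hlen := huplen a b ha' hb' hab.le hFa hFb
          have haβ : β ≤ a := (hneg a ha' hFa).1
          have hbβ : b ≤ 1 - β := (hpos b hb' hFb).2
          have hsub : A ⊆ Icc β a ∪ Icc b (1 - β) := by
            intro x hx
            have hx01 := hA01 hx
            rcases hAmem x hx with hxp | hxn
            · refine Or.inr ⟨?_, (hpos x hx01 hxp).2⟩
              rcases le_or_gt b x with h | h
              · exact h
              · exfalso
                rcases lt_trichotomy x a with h2 | h2 | h2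
                · have := hD x hx01 a ha' hxp hFa; linarith
                · rw [h2] at hxp; linarith
                · have := hgap x ⟨h2, h⟩; have := le_abs_self (F x); linarith
            · refine Or.inl ⟨(hneg x hx01 hxn).1, ?_⟩
              rcases le_or_gt x a with h | h
              · exact h
              · exfalso
                rcases lt_trichotomy x b with h2 | h2 | h2
                · have := hgap x ⟨h, h2⟩; have := neg_abs_le (F x); linarith
                · rw [← h2] at hFb; linarith
                · have := hD b hb' x hx01 hFb hxn; linarith
          exact vol_union2 A hsub haβ (by linarith) (by linarith)
      · -- no up pair: derive a down pair, single down crossing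
        push_neg at hU
        have hD : ∃ y1, y1 ∈ Icc (0:ℝ) 1 ∧ ∃ y2, y2 ∈ Icc (0:ℝ) 1 ∧
            σ ≤ F y1 ∧ F y2 ≤ -σ ∧ y1 < y2 := by
          rcases lt_trichotomy p q with h | h | h
          · exact ⟨p, hp, q, hq, hFp, hFq, h⟩
          · exfalso; rw [h] at hFp; linarith
          · exact absurd h (by simpa using hU q hq p hp hFq hFp)
        obtain ⟨y1, hy1, y2, hy2, hFy1, hFy2, hy12⟩ := hD
        obtain ⟨a, b, ha, hb, hab, hFa, hFb, hgap⟩ :=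
          crossing_lemma F hFc y1 y2 hy1 hy2 hy12 σ hσ hFy1 hFy2
        have ha' : a ∈ Icc (0:ℝ) 1 := Icc_subset_Icc hy1.1 hy2.2 ha
        have hb' : b ∈ Icc (0:ℝ) 1 := Icc_subset_Icc hy1.1 hy2.2 hb
        have hlen := hdownlen a b ha' hb' hab.le hFa hFb
        have haα : α ≤ a := (hpos a ha' hFa).1
        have hbα : b ≤ 1 - α := (hneg b hb' hFb).2
        have hsub : A ⊆ Icc α a ∪ Icc b (1 - α) := by
          intro x hx
          have hx01 := hA01 hx
          rcases hAmem x hx with hxp | hxn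
          · refine Or.inl ⟨(hpos x hx01 hxp).1, ?_⟩
            rcases le_or_gt x a with h | h
            · exact h
            · exfalso
              rcases lt_trichotomy x b with h2 | h2 | h2
              · have := hgap x ⟨h, h2⟩; have := le_abs_self (F x); linarith
              · rw [← h2] at hFb; linarith
              · exact absurd h2 (by simpa using hU b hb' x hx01 hFb hxp)
          · refine Or.inr ⟨?_, (hneg x hx01 hxn).2⟩
            rcases le_or_gt b x with h | h
            · exact h
            · exfalso
              rcases lt_trichotomy x a with h2 | h2 | h2
              · exact absurd h2 (by simpa using hU x hx01 a ha' hxn hFa)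
              · rw [h2] at hxn; linarith
              · have := hgap x ⟨h2, h⟩; have := neg_abs_le (F x); linarith
        exact vol_union2 A hsub haα (by linarith) (by linarith)
    · -- no negative excursion
      push_neg at hQ
      have hsub : A ⊆ Icc α (1 - β) := by
        intro x hx
        have hx01 := hA01 hx
        rcases hAmem x hx with hxp | hxn
        · exact ⟨(hpos x hx01 hxp).1, (hpos x hx01 hxp).2⟩
        · exact absurd hxn (by simpa using (hQ x hx01))
      calc volume A ≤ volume (Icc α (1 - β)) := measure_mono hsub
        _ = ENNReal.ofReal (1 - β - α) := by rw [Real.volume_Icc]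
        _ ≤ ENNReal.ofReal (1 - α - β) := ENNReal.ofReal_le_ofReal (by linarith)
  · -- no positive excursion
    push_neg at hP
    have hsub : A ⊆ Icc β (1 - α) := by
      intro x hx
      have hx01 := hA01 hx
      rcases hAmem x hx with hxp | hxn
      · exact absurd hxp (by simpa using (hP x hx01))
      · exact ⟨(hneg x hx01 hxn).1, (hneg x hx01 hxn).2⟩
    calc volume A ≤ volume (Icc β (1 - α)) := measure_mono hsub
      _ = ENNReal.ofReal (1 - α - β) := by rw [Real.volume_Icc]

theorem main_inequality (m M : ℝ) (hm : m < 0) (hM : 0 < M)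
    (f : ℝ → ℝ) (hmeas : Measurable f)
    (hbound : ∀ᵐ x ∂(volume.restrict (Icc (0:ℝ) 1)), f x ∈ Icc m M)
    (hint : ∫ x in (0:ℝ)..1, f x = 0)
    (φ : ℝ → ℝ)
    (hφ0 : ∀ x ∈ Icc (0:ℝ) (-m * M / (M - m)), 0 ≤ φ x)
    (hφ : MonotoneOn φ (Icc 0 (-m * M / (M - m)))) :
    (∫ x in (0:ℝ)..1, φ |∫ t in (0:ℝ)..x, f t|) ≤
      (1 / (-m * M / (M - m))) * ∫ t in (0:ℝ)..(-m * M / (M - m)), φ t := by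
  set T : ℝ := -m * M / (M - m) with hTdef
  have hm' : (0:ℝ) < -m := by linarith
  have hMm : (0:ℝ) < M - m := by linarith
  have hT : 0 < T := by rw [hTdef]; positivity
  -- integrability of f on [0,1]
  have hfin : IntegrableOn f (Icc (0:ℝ) 1) volume := by
    have hvol : volume (Icc (0:ℝ) 1) < ⊤ := by
      rw [Real.volume_Icc]; exact ENNReal.ofReal_lt_top
    refine Integrable.mono' (g := fun _ => max M (-m))
      (integrableOn_const hvol.ne) hmeas.aestronglyMeasurable ?_
    filter_upwards [hbound] with x hx
    rw [Real.norm_eq_abs, abs_le]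
    exact ⟨by linarith [hx.1, le_max_right M (-m)], by linarith [hx.2, le_max_left M (-m)]⟩
  have hintio : ∀ a b : ℝ, a ∈ Icc (0:ℝ) 1 → b ∈ Icc (0:ℝ) 1 →
      IntervalIntegrable f volume a b := by
    intro a b ha hb
    rw [intervalIntegrable_iff]
    refine hfin.mono_set ?_
    refine subset_trans ?_ (Icc_subset_Icc (le_min ha.1 hb.1) (max_le ha.2 hb.2))
    exact Ioc_subset_Icc_self
  set F : ℝ → ℝ := fun x => ∫ t in (0:ℝ)..x, f t with hFdef
  have h0mem : (0:ℝ) ∈ Icc (0:ℝ) 1 := ⟨le_rfl, zero_le_one⟩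
  have h1mem : (1:ℝ) ∈ Icc (0:ℝ) 1 := ⟨zero_le_one, le_rfl⟩
  have hF0 : F 0 = 0 := intervalIntegral.integral_same
  have hF1 : F 1 = 0 := hint
  -- slope bounds
  have hsl : ∀ a b, a ∈ Icc (0:ℝ) 1 → b ∈ Icc (0:ℝ) 1 → a ≤ b →
      m * (b - a) ≤ F b - F a ∧ F b - F a ≤ M * (b - a) := by
    intro a b ha hb hab
    have hadd : F a + ∫ t in a..b, f t = F b :=
      intervalIntegral.integral_add_adjacent_intervals (hintio 0 a h0mem ha) (hintio a b ha hb)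
    have hbnd : ∀ᵐ x ∂(volume.restrict (Icc a b)), f x ∈ Icc m M :=
      ae_restrict_of_ae_restrict_of_subset (Icc_subset_Icc ha.1 hb.2) hbound
    have hlow : (∫ t in a..b, (fun _ => m) t) ≤ ∫ t in a..b, f t :=
      intervalIntegral.integral_mono_ae_restrict hab intervalIntegrable_const
        (hintio a b ha hb) (hbnd.mono fun x hx => hx.1)
    have hhigh : (∫ t in a..b, f t) ≤ ∫ t in a..b, (fun _ => M) t :=
      intervalIntegral.integral_mono_ae_restrict hab (hintio a b ha hb)
        intervalIntegrable_const (hbnd.mono fun x hx => hx.2)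
    rw [intervalIntegral.integral_const] at hlow hhigh
    simp only [smul_eq_mul] at hlow hhigh
    constructor <;> nlinarith
  -- envelope bounds
  have hup : ∀ x ∈ Icc (0:ℝ) 1,
      F x ≤ M * x ∧ m * x ≤ F x ∧ F x ≤ -m * (1 - x) ∧ -M * (1 - x) ≤ F x := by
    intro x hx
    have ha := hsl 0 x h0mem hx hx.1
    have hb := hsl x 1 hx h1mem hx.2
    rw [hF0] at ha
    rw [hF1] at hb
    exact ⟨by linarith [ha.2], by linarith [ha.1], by linarith [hb.1], by linarith [hb.2]⟩
  -- continuity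
  have hFc : ContinuousOn F (Icc 0 1) := by
    have h : IntegrableOn f (uIcc (0:ℝ) 1) volume := by
      rwa [uIcc_of_le zero_le_one]
    have := intervalIntegral.continuousOn_primitive_interval h
    rwa [uIcc_of_le zero_le_one] at this
  -- |F| ≤ T on [0,1]
  have hFT : ∀ x ∈ Icc (0:ℝ) 1, |F x| ≤ T := by
    intro x hx
    obtain ⟨h1, h2, h3, h4⟩ := hup x hx
    rw [abs_le]
    constructor
    · rcases le_or_gt x (M / (M - m)) with h | h
      · have hmc : m * (M / (M - m)) = -T := by rw [hTdef]; field_simp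
        nlinarith [mul_nonneg (sub_nonneg.2 h) hm'.le]
      · have hMc : M * (1 - M / (M - m)) = T := by
          rw [hTdef, eq_div_iff hMm.ne']; field_simp [hMm.ne']; ring
        nlinarith [mul_nonneg (sub_nonneg.2 h.le) hM.le]
    · rcases le_or_gt x (-m / (M - m)) with h | h
      · have hMd : M * (-m / (M - m)) = T := by
          rw [hTdef, eq_div_iff hMm.ne']; field_simp [hMm.ne']
        nlinarith [mul_nonneg (sub_nonneg.2 h) hM.le]
      · have hmd : -m * (1 - -m / (M - m)) = T := by
          rw [hTdef, eq_div_iff hMm.ne']; field_simp [hMm.ne']; ring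
        nlinarith [mul_nonneg (sub_nonneg.2 h.le) hm'.le]
  -- the clamped monotone extension of φ
  set φb : ℝ → ℝ := fun t => φ (max 0 (min t T)) with hφbdef
  have hclamp : ∀ t : ℝ, max 0 (min t T) ∈ Icc (0:ℝ) T :=
    fun t => ⟨le_max_left _ _, max_le hT.le (min_le_right _ _)⟩
  have hφb_mono : Monotone φb := fun s t hst =>
    hφ (hclamp s) (hclamp t) (max_le_max le_rfl (min_le_min_right _ hst))
  have hφb_nonneg : ∀ t, 0 ≤ φb t := fun t => hφ0 _ (hclamp t)
  have hφb_meas : Measurable φb := hφb_mono.measurable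
  have hφb_eq : ∀ t : ℝ, 0 ≤ t → t ≤ T → φb t = φ t := by
    intro t h1 h2
    rw [hφbdef]
    simp only []
    rw [min_eq_left h2, max_eq_right h1]
  have hφb_le : ∀ t, φb t ≤ φ T := fun t =>
    hφ (hclamp t) ⟨hT.le, le_rfl⟩ (max_le hT.le (min_le_right _ _))
  -- rewrite the two interval integrals
  have e1 : (∫ x in (0:ℝ)..1, φ |∫ t in (0:ℝ)..x, f t|) = ∫ x in Ioc (0:ℝ) 1, φb |F x| := by
    rw [intervalIntegral.integral_of_le zero_le_one]
    exact setIntegral_congr_fun measurableSet_Ioc fun x hx =>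
      (hφb_eq _ (abs_nonneg _) (hFT x (Ioc_subset_Icc_self hx))).symm
  have e2 : (∫ t in (0:ℝ)..T, φ t) = ∫ t in Ioc (0:ℝ) T, φb t := by
    rw [intervalIntegral.integral_of_le hT.le]
    exact setIntegral_congr_fun measurableSet_Ioc fun t ht =>
      (hφb_eq t ht.1.le ht.2).symm
  rw [e1, e2]
  -- measurability
  have hFaem : AEMeasurable F (volume.restrict (Ioc (0:ℝ) 1)) :=
    (hFc.aemeasurable measurableSet_Icc).mono_measure
      (Measure.restrict_mono Ioc_subset_Icc_self le_rfl)
  have hgaem : AEMeasurable (fun x => φb |F x|) (volume.restrict (Ioc (0:ℝ) 1)) :=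
    (hφb_meas.comp measurable_abs).comp_aemeasurable hFaem
  -- pass to lintegrals
  have hL : (∫ x in Ioc (0:ℝ) 1, φb |F x|) =
      (∫⁻ x in Ioc (0:ℝ) 1, ENNReal.ofReal (φb |F x|)).toReal :=
    integral_eq_lintegral_of_nonneg_ae (ae_of_all _ fun x => hφb_nonneg _)
      hgaem.aestronglyMeasurable
  have hR : (∫ t in Ioc (0:ℝ) T, φb t) =
      (∫⁻ t in Ioc (0:ℝ) T, ENNReal.ofReal (φb t)).toReal :=
    integral_eq_lintegral_of_nonneg_ae (ae_of_all _ fun t => hφb_nonneg t)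
      hφb_meas.aestronglyMeasurable
  set L := ∫⁻ x in Ioc (0:ℝ) 1, ENNReal.ofReal (φb |F x|) with hLdef
  set R := ∫⁻ t in Ioc (0:ℝ) T, ENNReal.ofReal (φb t) with hRdef
  have hRfin : R ≠ ⊤ := by
    have hle : R ≤ ENNReal.ofReal (φ T) * volume (Ioc (0:ℝ) T) := by
      rw [hRdef]
      calc (∫⁻ t in Ioc (0:ℝ) T, ENNReal.ofReal (φb t))
          ≤ ∫⁻ _ in Ioc (0:ℝ) T, ENNReal.ofReal (φ T) :=
            lintegral_mono fun t => ENNReal.ofReal_le_ofReal (hφb_le t)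
        _ = ENNReal.ofReal (φ T) * volume (Ioc (0:ℝ) T) := setLIntegral_const _ _
    refine ne_top_of_le_ne_top ?_ hle
    rw [Real.volume_Ioc]
    exact ENNReal.mul_ne_top ENNReal.ofReal_ne_top ENNReal.ofReal_ne_top
  -- key pointwise distributional comparison
  have key : ENNReal.ofReal T * L ≤ R := by
    rw [hLdef, hRdef,
      lintegral_eq_lintegral_meas_lt _ (ae_of_all _ fun x => hφb_nonneg _) hgaem,
      lintegral_eq_lintegral_meas_lt _ (ae_of_all _ fun t => hφb_nonneg t)
        hφb_meas.aemeasurable,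
      ← lintegral_const_mul' _ _ ENNReal.ofReal_ne_top]
    refine lintegral_mono_ae ?_
    filter_upwards [ae_restrict_mem measurableSet_Ioi] with s hs
    rw [Measure.restrict_apply' measurableSet_Ioc, Measure.restrict_apply' measurableSet_Ioc]
    by_cases hne : ∃ x, x ∈ {x : ℝ | s < φb |F x|} ∩ Ioc (0:ℝ) 1
    · obtain ⟨x₀, hx₀S, hx₀I⟩ := hne
      set SS := {t : ℝ | s < φb t} ∩ Icc 0 T with hSSdef
      have hx₀T : |F x₀| ∈ SS :=
        ⟨hx₀S, abs_nonneg _, hFT x₀ (Ioc_subset_Icc_self hx₀I)⟩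
      have hSSne : SS.Nonempty := ⟨_, hx₀T⟩
      have hSSbdd : BddBelow SS := ⟨0, fun t ht => ht.2.1⟩
      set σ := sInf SS with hσdef
      have hσ0 : 0 ≤ σ := le_csInf hSSne fun t ht => ht.2.1
      have hsub1 : {x : ℝ | s < φb |F x|} ∩ Ioc (0:ℝ) 1 ⊆
          {x ∈ Icc (0:ℝ) 1 | σ ≤ |F x|} := by
        rintro x ⟨hxs, hxI⟩
        exact ⟨Ioc_subset_Icc_self hxI,
          csInf_le hSSbdd ⟨hxs, abs_nonneg _, hFT x (Ioc_subset_Icc_self hxI)⟩⟩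
      have hsub2 : Ioc σ T ⊆ {t : ℝ | s < φb t} ∩ Ioc (0:ℝ) T := by
        intro t ht
        obtain ⟨t', ht'SS, ht't⟩ := (csInf_lt_iff hSSbdd hSSne).mp ht.1
        exact ⟨lt_of_lt_of_le ht'SS.1 (hφb_mono ht't.le), lt_of_le_of_lt hσ0 ht.1, ht.2⟩
      have h2 : ENNReal.ofReal (T - σ) ≤ volume ({t : ℝ | s < φb t} ∩ Ioc 0 T) := by
        rw [← Real.volume_Ioc]; exact measure_mono hsub2
      rcases eq_or_lt_of_le hσ0 with h0 | h0
      · calc ENNReal.ofReal T * volume ({x : ℝ | s < φb |F x|} ∩ Ioc (0:ℝ) 1)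
            ≤ ENNReal.ofReal T * volume (Ioc (0:ℝ) 1) :=
              mul_le_mul_right (measure_mono inter_subset_right) _
          _ = ENNReal.ofReal T * ENNReal.ofReal 1 := by rw [Real.volume_Ioc]; norm_num
          _ = ENNReal.ofReal T := by rw [ENNReal.ofReal_one, mul_one]
          _ = ENNReal.ofReal (T - σ) := by rw [← h0, sub_zero]
          _ ≤ _ := h2
      · have hd := distrib_bound m M hm hM F hFc hup hsl σ h0
        have harith : 1 - σ / M - σ / (-m) = (T - σ) / T := by
          rw [hTdef, eq_div_iff (show -m * M / (M - m) ≠ 0 from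
            (div_pos (mul_pos (neg_pos.mpr hm) hM) hMm).ne')]
          field_simp [hm.ne, hM.ne', hMm.ne']
          ring
        calc ENNReal.ofReal T * volume ({x : ℝ | s < φb |F x|} ∩ Ioc (0:ℝ) 1)
            ≤ ENNReal.ofReal T * volume {x ∈ Icc (0:ℝ) 1 | σ ≤ |F x|} :=
              mul_le_mul_right (measure_mono hsub1) _
          _ ≤ ENNReal.ofReal T * ENNReal.ofReal ((T - σ) / T) := by
              rw [← harith]; exact mul_le_mul_right hd _
          _ = ENNReal.ofReal (T * ((T - σ) / T)) := (ENNReal.ofReal_mul hT.le).symm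
          _ = ENNReal.ofReal (T - σ) := by rw [mul_div_cancel₀ _ (ne_of_gt hT)]
          _ ≤ _ := h2
    · push_neg at hne
      have hemp : {x : ℝ | s < φb |F x|} ∩ Ioc (0:ℝ) 1 = ∅ :=
        eq_empty_iff_forall_notMem.mpr hne
      rw [hemp, measure_empty, mul_zero]
      exact zero_le
  -- conclude
  rw [hL, hR]
  by_cases hLfin : L = ⊤
  · rw [hLfin]
    simp only [ENNReal.toReal_top]
    positivity
  · have h1 : (ENNReal.ofReal T * L).toReal ≤ R.toReal := ENNReal.toReal_mono hRfin key
    rw [ENNReal.toReal_mul, ENNReal.toReal_ofReal hT.le] at h1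
    rw [one_div, inv_mul_eq_div, le_div_iff₀ hT]
    nlinarith [h1]
end

section
/- Let m, M be real numbers with m < 0 < M, and let φ be a nonnegative monotone increasing function on [0, -mM/(M-m)]. Define f₀ : [0,1] → ℝ by f₀(x) = M for x ∈ [0, -m/(M-m)) and f₀(x) = m for x ∈ [-m/(M-m), 1]. Then f₀ ∈ F_{m,M} and ∫₀¹ φ(|J(f₀)(x)|) dx = K(φ, -mM/(M-m)), where K(φ,t) = (1/t)∫₀ᵗ φ(x) dx. -/
open MeasureTheory Set

theorem extremal_function_attains (m M : ℝ) (hm : m < 0) (hM : 0 < M)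
    (φ : ℝ → ℝ)
    (hφ0 : ∀ x ∈ Icc (0:ℝ) (-m * M / (M - m)), 0 ≤ φ x)
    (hφ : MonotoneOn φ (Icc 0 (-m * M / (M - m))))
    (f₀ : ℝ → ℝ) (hf₀ : f₀ = fun x => if x < -m / (M - m) then M else m) :
    Measurable f₀ ∧
    (∀ x ∈ Icc (0:ℝ) 1, f₀ x ∈ Icc m M) ∧
    (∫ x in (0:ℝ)..1, f₀ x = 0) ∧
    ((∫ x in (0:ℝ)..1, φ |∫ t in (0:ℝ)..x, f₀ t|) =
      (1 / (-m * M / (M - m))) * ∫ t in (0:ℝ)..(-m * M / (M - m)), φ t) := by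
  have hMm : (0:ℝ) < M - m := by linarith
  set a : ℝ := -m / (M - m) with ha_def
  set T : ℝ := -m * M / (M - m) with hT_def
  have ha0 : 0 < a := div_pos (by linarith) hMm
  have ha1 : a < 1 := by
    rw [ha_def, div_lt_one hMm]; linarith
  have hT0 : 0 < T := div_pos (by nlinarith) hMm
  have hTa : T = M * a := by rw [hT_def, ha_def]; ring
  have hMma : M * a - m * a = -m := by
    rw [ha_def]; field_simp; ring
  have hmeas : Measurable f₀ := by
    rw [hf₀]
    exact Measurable.ite measurableSet_Iio measurable_const measurable_const
  have hInt : ∀ c d : ℝ, IntervalIntegrable f₀ volume c d := by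
    intro c d
    rw [intervalIntegrable_iff]
    apply Integrable.mono' (g := fun _ => max M (-m))
      (integrableOn_const measure_Ioc_lt_top.ne)
      (hmeas.aestronglyMeasurable.restrict)
    filter_upwards with t
    rw [hf₀]
    simp only
    split
    · rw [Real.norm_eq_abs, abs_of_pos hM]; exact le_max_left _ _
    · rw [Real.norm_eq_abs, abs_of_neg hm]; exact le_max_right _ _
  have hJ1 : ∀ x : ℝ, x ≤ a → ∫ t in (0:ℝ)..x, f₀ t = M * x := by
    intro x hx
    have hne : ∀ᵐ t : ℝ, t ≠ a := by
      simp [ae_iff, Set.setOf_eq_eq_singleton]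
    have : ∫ t in (0:ℝ)..x, f₀ t = ∫ t in (0:ℝ)..x, M := by
      apply intervalIntegral.integral_congr_ae
      filter_upwards [hne] with t ht htm
      rw [hf₀]
      simp only
      rw [if_pos]
      rcases Set.mem_uIoc.1 htm with h | h
      · exact lt_of_le_of_ne (h.2.trans hx) ht
      · exact h.2.trans_lt ha0
    rw [this, intervalIntegral.integral_const, smul_eq_mul, sub_zero, mul_comm]
  have hJ2 : ∀ x : ℝ, a ≤ x → ∫ t in (0:ℝ)..x, f₀ t = m * x - m := by
    intro x hx
    rw [← intervalIntegral.integral_add_adjacent_intervals (hInt 0 a) (hInt a x),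
      hJ1 a le_rfl]
    have : ∫ t in a..x, f₀ t = ∫ t in a..x, m := by
      apply intervalIntegral.integral_congr
      intro t htm
      rw [Set.uIcc_of_le hx] at htm
      rw [hf₀]
      simp only
      rw [if_neg (not_lt.2 htm.1)]
    rw [this, intervalIntegral.integral_const, smul_eq_mul]
    linear_combination hMma
  refine ⟨hmeas, ?_, ?_, ?_⟩
  · intro x _
    rw [hf₀]
    simp only
    split
    · exact ⟨by linarith, le_rfl⟩
    · exact ⟨le_rfl, by linarith⟩
  · rw [hJ2 1 ha1.le]; ring
  · -- main computation
    have hφint : IntervalIntegrable φ volume 0 T :=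
      (hφ.mono (by rw [Set.uIcc_of_le hT0.le])).intervalIntegrable
    have h1 : IntervalIntegrable (fun x => φ (M * x)) volume 0 a := by
      have h := hφint.comp_mul_left (c := M)
      rw [zero_div, show T / M = a from by rw [hT_def, ha_def]; field_simp] at h
      exact h
    have h2 : IntervalIntegrable (fun x => φ (m * x - m)) volume a 1 := by
      have h := (hφint.comp_mul_left (c := m)).comp_add_right (-m / m)
      have hma : T / m - (-m/m) = a := by
        rw [div_sub_div_same, show T - -m = m * a from by rw [hT_def, ha_def]; field_simp; ring,
          mul_div_cancel_left₀ _ hm.ne]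
      have h01 : (0:ℝ) / m - (-m/m) = 1 := by
        rw [zero_div, zero_sub, neg_div, neg_neg, div_self hm.ne]
      rw [hma, h01] at h
      apply h.symm.congr_ae
      filter_upwards with t
      congr 1
      rw [neg_div, div_self hm.ne]
      ring
    have e1 : Set.EqOn (fun x => φ |∫ t in (0:ℝ)..x, f₀ t|) (fun x => φ (M * x))
        (Set.uIcc 0 a) := by
      intro x hx
      rw [Set.uIcc_of_le ha0.le] at hx
      simp only
      rw [hJ1 x hx.2, abs_of_nonneg (by nlinarith [hx.1] : (0:ℝ) ≤ M * x)]
    have e2 : Set.EqOn (fun x => φ |∫ t in (0:ℝ)..x, f₀ t|) (fun x => φ (m * x - m))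
        (Set.uIcc a 1) := by
      intro x hx
      rw [Set.uIcc_of_le ha1.le] at hx
      simp only
      rw [hJ2 x hx.1, abs_of_nonneg (by nlinarith [hx.2] : (0:ℝ) ≤ m * x - m)]
    have g1 : IntervalIntegrable (fun x => φ |∫ t in (0:ℝ)..x, f₀ t|) volume 0 a :=
      h1.congr_ae (ae_restrict_of_forall_mem measurableSet_uIoc
        (fun t ht => (e1 (Set.uIoc_subset_uIcc ht)).symm))
    have g2 : IntervalIntegrable (fun x => φ |∫ t in (0:ℝ)..x, f₀ t|) volume a 1 :=
      h2.congr_ae (ae_restrict_of_forall_mem measurableSet_uIoc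
        (fun t ht => (e2 (Set.uIoc_subset_uIcc ht)).symm))
    rw [← intervalIntegral.integral_add_adjacent_intervals g1 g2,
      intervalIntegral.integral_congr e1, intervalIntegral.integral_congr e2]
    have i1 : (∫ x in (0:ℝ)..a, φ (M * x)) = M⁻¹ * ∫ t in (0:ℝ)..T, φ t := by
      have := intervalIntegral.integral_comp_mul_left (a := (0:ℝ)) (b := a) φ hM.ne'
      rw [this, mul_zero, ← hTa, smul_eq_mul]
    have i2 : (∫ x in a..(1:ℝ), φ (m * x - m)) = (-m)⁻¹ * ∫ t in (0:ℝ)..T, φ t := by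
      have h := intervalIntegral.integral_comp_mul_sub (a := a) (b := (1:ℝ)) φ hm.ne m
      rw [h]
      have e1' : m * a - m = T := by rw [ha_def, hT_def]; field_simp; ring
      have e2' : m * 1 - m = 0 := by ring
      rw [e1', e2', intervalIntegral.integral_symm, smul_eq_mul]
      ring
    rw [i1, i2]
    have hcoef : M⁻¹ + (-m)⁻¹ = 1 / T := by
      rw [hT_def, one_div, inv_div]
      rw [inv_eq_one_div, inv_eq_one_div, div_add_div _ _ hM.ne' (neg_ne_zero.2 hm.ne)]
      rw [div_eq_div_iff (mul_pos hM (neg_pos.2 hm)).ne' (mul_pos (neg_pos.2 hm) hM).ne']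
      ring
    rw [← hcoef]; ring
end

section
/- Let m, M be real numbers with m < 0 < M, and let p be a positive real number. Then for every f ∈ F_{m,M}, (∫₀¹ |J(f)(x)|ᵖ dx)^{1/p} ≤ (p+1)^{-1/p} · (-mM)/(M-m). -/
open MeasureTheory Set

/-- Left ramp: if `g` is continuous on `[0,1]`, `g 0 = 0`, and `g x₀ > t > 0` for some
`x₀ ∈ [0,1]`, then there is an interval `(u,v) ⊆ [0,1]` on which `0 < g < t`,
with `g v - g u ≥ t`. -/
lemma ramp_left (g : ℝ → ℝ) (hg : ContinuousOn g (Icc (0:ℝ) 1)) (hg0 : g 0 = 0)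
    (t x₀ : ℝ) (ht : 0 < t) (hx₀ : x₀ ∈ Icc (0:ℝ) 1) (hgx : t < g x₀) :
    ∃ u v, u ∈ Icc (0:ℝ) 1 ∧ v ∈ Icc (0:ℝ) 1 ∧ u ≤ v ∧ t ≤ g v - g u ∧
      ∀ z ∈ Ioo u v, 0 < g z ∧ g z < t := by
  obtain ⟨hx₀0, hx₀1⟩ := hx₀
  have hsub : Icc (0:ℝ) x₀ ⊆ Icc 0 1 := Icc_subset_Icc le_rfl hx₀1
  set T₁ : Set ℝ := Icc 0 x₀ ∩ g ⁻¹' (Iic 0) with hT₁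
  have hT₁closed : IsClosed T₁ :=
    (hg.mono hsub).preimage_isClosed_of_isClosed isClosed_Icc isClosed_Iic
  have hT₁ne : T₁.Nonempty := ⟨0, ⟨le_rfl, hx₀0⟩, by simp [hg0]⟩
  have hT₁bdd : BddAbove T₁ :=
    (Bornology.IsBounded.subset (Metric.isBounded_Icc 0 x₀) inter_subset_left).bddAbove
  set u := sSup T₁ with hu_def
  have hu : u ∈ T₁ := hT₁closed.csSup_mem hT₁ne hT₁bdd
  obtain ⟨⟨hu0, hux₀⟩, hgu⟩ := hu
  have hgu' : g u ≤ 0 := hgu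
  have husub : Icc u x₀ ⊆ Icc 0 1 := Icc_subset_Icc hu0 hx₀1
  set T₂ : Set ℝ := Icc u x₀ ∩ g ⁻¹' (Ici t) with hT₂
  have hT₂closed : IsClosed T₂ :=
    (hg.mono husub).preimage_isClosed_of_isClosed isClosed_Icc isClosed_Ici
  have hT₂ne : T₂.Nonempty := ⟨x₀, ⟨hux₀, le_rfl⟩, le_of_lt hgx⟩
  have hT₂bdd : BddBelow T₂ :=
    (Bornology.IsBounded.subset (Metric.isBounded_Icc u x₀) inter_subset_left).bddBelow
  set v := sInf T₂ with hv_def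
  have hv : v ∈ T₂ := hT₂closed.csInf_mem hT₂ne hT₂bdd
  obtain ⟨⟨huv, hvx₀⟩, hgv⟩ := hv
  have hgv' : t ≤ g v := hgv
  refine ⟨u, v, ⟨hu0, hux₀.trans hx₀1⟩, ⟨hu0.trans huv, hvx₀.trans hx₀1⟩, huv, by linarith, ?_⟩
  rintro z ⟨huz, hzv⟩
  constructor
  · by_contra h
    push_neg at h
    have hz : z ∈ T₁ := ⟨⟨hu0.trans huz.le, hzv.le.trans hvx₀⟩, h⟩
    exact absurd (le_csSup hT₁bdd hz) (not_le.mpr huz)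
  · by_contra h
    push_neg at h
    have hz : z ∈ T₂ := ⟨⟨huz.le, hzv.le.trans hvx₀⟩, h⟩
    exact absurd (csInf_le hT₂bdd hz) (not_le.mpr hzv)

/-- Right ramp: mirror image of `ramp_left`, using `g 1 = 0`. -/
lemma ramp_right (g : ℝ → ℝ) (hg : ContinuousOn g (Icc (0:ℝ) 1)) (hg1 : g 1 = 0)
    (t x₀ : ℝ) (ht : 0 < t) (hx₀ : x₀ ∈ Icc (0:ℝ) 1) (hgx : t < g x₀) :
    ∃ u v, u ∈ Icc (0:ℝ) 1 ∧ v ∈ Icc (0:ℝ) 1 ∧ u ≤ v ∧ g v - g u ≤ -t ∧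
      ∀ z ∈ Ioo u v, 0 < g z ∧ g z < t := by
  have hmaps : MapsTo (fun x : ℝ => 1 - x) (Icc (0:ℝ) 1) (Icc (0:ℝ) 1) := by
    intro x hx
    simp only [mem_Icc] at hx ⊢
    constructor <;> linarith [hx.1, hx.2]
  have hhcont : ContinuousOn (fun x => g (1 - x)) (Icc (0:ℝ) 1) :=
    hg.comp ((continuous_const.sub continuous_id).continuousOn) hmaps
  have hh0 : g (1 - (0:ℝ)) = 0 := by norm_num [hg1]
  have hx₀' : (1 - x₀) ∈ Icc (0:ℝ) 1 := hmaps hx₀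
  have hgx' : t < g (1 - (1 - x₀)) := by
    have : (1 : ℝ) - (1 - x₀) = x₀ := by ring
    rw [this]; exact hgx
  obtain ⟨u', v', hu', hv', huv', hgain, hmid⟩ :=
    ramp_left (fun x => g (1 - x)) hhcont hh0 t (1 - x₀) ht hx₀' hgx'
  refine ⟨1 - v', 1 - u', ⟨by linarith [hv'.2], by linarith [hv'.1]⟩,
    ⟨by linarith [hu'.2], by linarith [hu'.1]⟩, by linarith, ?_, ?_⟩
  · have h1 : (1 : ℝ) - (1 - u') = u' := by ring
    have h2 : (1 : ℝ) - (1 - v') = v' := by ring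
    rw [show g (1 - u') = g (1 - u') from rfl] at *
    have := hgain
    linarith [this]
  · rintro z ⟨hz1, hz2⟩
    have hmem : (1 - z) ∈ Ioo u' v' := ⟨by linarith, by linarith⟩
    have := hmid _ hmem
    have hzz : (1 : ℝ) - (1 - z) = z := by ring
    rw [hzz] at this
    exact this

/-- Key measure step: if `∫_(u,v) f ≥ t` with `(u,v) ⊆ W ⊆ [0,1]` and `f ≤ C` a.e. on `[0,1]`,
then the part of `W` where `f > 0` has measure at least `t / C`. -/
lemma key_step (f : ℝ → ℝ) (hmeas : Measurable f)
    (hfint : IntegrableOn f (Icc (0:ℝ) 1))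
    (C : ℝ) (hC : 0 < C)
    (hfC : ∀ᵐ x ∂(volume.restrict (Icc (0:ℝ) 1)), f x ≤ C)
    (W : Set ℝ) (hWmeas : MeasurableSet W) (hWsub : W ⊆ Icc 0 1)
    (t u v : ℝ) (huv : u ≤ v) (hu : u ∈ Icc (0:ℝ) 1) (hv : v ∈ Icc (0:ℝ) 1)
    (hIoo : Ioo u v ⊆ W)
    (hgain : t ≤ ∫ x in u..v, f x) :
    ENNReal.ofReal (t / C) ≤ volume (W ∩ {x | 0 < f x}) := by
  set fp : ℝ → ℝ := fun x => max (f x) 0 with hfp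
  have hIocsub : Ioc u v ⊆ Icc (0:ℝ) 1 :=
    fun x hx => ⟨hu.1.trans hx.1.le, hx.2.trans hv.2⟩
  have hfIoc : IntegrableOn f (Ioc u v) := hfint.mono_set hIocsub
  have hfpIoc : IntegrableOn fp (Ioc u v) := hfIoc.pos_part
  have hfpW : IntegrableOn fp W := (hfint.mono_set hWsub).pos_part
  set A : Set ℝ := W ∩ {x | 0 < f x} with hA
  have hAmeas : MeasurableSet A := hWmeas.inter (measurableSet_lt measurable_const hmeas)
  have hAsub : A ⊆ W := inter_subset_left
  have hAfin : volume A < ⊤ := by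
    have h := measure_mono (hAsub.trans hWsub) (μ := volume)
    rw [Real.volume_Icc] at h
    exact lt_of_le_of_lt h (by norm_num)
  have h1 : t ≤ ∫ x in Ioc u v, f x := by
    rwa [← intervalIntegral.integral_of_le huv]
  have h2 : (∫ x in Ioc u v, f x) ≤ ∫ x in Ioc u v, fp x :=
    integral_mono hfIoc hfpIoc (fun x => le_max_left _ _)
  have h3 : (∫ x in Ioc u v, fp x) = ∫ x in Ioo u v, fp x :=
    integral_Ioc_eq_integral_Ioo
  have h4 : (∫ x in Ioo u v, fp x) ≤ ∫ x in W, fp x := by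
    apply setIntegral_mono_set hfpW
    · exact Filter.Eventually.of_forall (fun x => le_max_right _ _)
    · exact HasSubset.Subset.eventuallyLE hIoo
  have h5 : (∫ x in W, fp x) = ∫ x in A, fp x := by
    have hzero : (∫ x in W \ A, fp x) = 0 := by
      apply setIntegral_eq_zero_of_forall_eq_zero
      rintro x ⟨hxW, hxA⟩
      have hnl : ¬ 0 < f x := fun h => hxA ⟨hxW, h⟩
      exact max_eq_right (not_lt.mp hnl)
    calc (∫ x in W, fp x) = ∫ x in A ∪ (W \ A), fp x := by rw [union_diff_cancel hAsub]
      _ = (∫ x in A, fp x) + ∫ x in W \ A, fp x :=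
          setIntegral_union disjoint_sdiff_right (hWmeas.diff hAmeas)
            (hfpW.mono_set hAsub) (hfpW.mono_set diff_subset)
      _ = ∫ x in A, fp x := by rw [hzero, add_zero]
  have h6 : (∫ x in A, fp x) ≤ C * (volume A).toReal := by
    have hbd : ∀ᵐ x ∂(volume.restrict A), ‖fp x‖ ≤ C := by
      have hae : ∀ᵐ x ∂(volume.restrict A), f x ≤ C :=
        ae_restrict_of_ae_restrict_of_subset (hAsub.trans hWsub) hfC
      filter_upwards [hae] with x hx
      rw [Real.norm_eq_abs, abs_of_nonneg (le_max_right _ _)]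
      exact max_le hx hC.le
    have hnorm := norm_setIntegral_le_of_norm_le_const_ae hAfin hbd
    calc (∫ x in A, fp x) ≤ ‖∫ x in A, fp x‖ := le_abs_self _
      _ ≤ C * (volume A).toReal := hnorm
  have hfinal : t / C ≤ (volume A).toReal := by
    rw [div_le_iff₀ hC]
    nlinarith [h1, h2, h3, h4, h5, h6]
  calc ENNReal.ofReal (t / C) ≤ ENNReal.ofReal ((volume A).toReal) :=
        ENNReal.ofReal_le_ofReal hfinal
    _ = volume A := ENNReal.ofReal_toReal hAfin.ne

theorem Lp_norm_inequality (m M : ℝ) (hm : m < 0) (hM : 0 < M)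
    (p : ℝ) (hp : 0 < p)
    (f : ℝ → ℝ) (hmeas : Measurable f)
    (hbound : ∀ᵐ x ∂(volume.restrict (Icc (0:ℝ) 1)), f x ∈ Icc m M)
    (hint : ∫ x in (0:ℝ)..1, f x = 0) :
    (∫ x in (0:ℝ)..1, |∫ t in (0:ℝ)..x, f t| ^ p) ^ (1 / p) ≤
      (p + 1) ^ (-(1 / p)) * (-m * M / (M - m)) := by
  have hMm : (0:ℝ) < M - m := by linarith
  set c : ℝ := -m * M / (M - m) with hc
  have hcpos : 0 < c := by
    apply div_pos _ hMm
    nlinarith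
  -- integrability of f on [0,1]
  have hfint : IntegrableOn f (Icc (0:ℝ) 1) := by
    have hbd : ∀ᵐ x ∂(volume.restrict (Icc (0:ℝ) 1)), ‖f x‖ ≤ max M (-m) := by
      filter_upwards [hbound] with x hx
      rw [Real.norm_eq_abs, abs_le]
      obtain ⟨h1, h2⟩ := hx
      constructor
      · have := le_max_right M (-m); linarith
      · exact h2.trans (le_max_left _ _)
    have hconst : IntegrableOn (fun _ : ℝ => max M (-m)) (Icc (0:ℝ) 1) volume := by
      apply integrableOn_const ?_ (by simp)
      rw [Real.volume_Icc]
      norm_num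
    exact Integrable.mono' hconst hmeas.aestronglyMeasurable hbd
  have hii : ∀ u v : ℝ, u ∈ Icc (0:ℝ) 1 → v ∈ Icc (0:ℝ) 1 → u ≤ v →
      IntervalIntegrable f volume u v := by
    intro u v hu hv huv
    rw [intervalIntegrable_iff_integrableOn_Ioc_of_le huv]
    exact hfint.mono_set (fun x hx => ⟨hu.1.trans hx.1.le, hx.2.trans hv.2⟩)
  set g : ℝ → ℝ := fun x => ∫ s in (0:ℝ)..x, f s with hgdef
  have hg0 : g 0 = 0 := by rw [hgdef]; simp
  have hg1 : g 1 = 0 := by rw [hgdef]; simpa using hint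
  have hgcont : ContinuousOn g (Icc (0:ℝ) 1) := by
    rw [hgdef]
    have huicc : Icc (0:ℝ) 1 = uIcc (0:ℝ) 1 := (uIcc_of_le zero_le_one).symm
    rw [huicc]
    exact intervalIntegral.continuousOn_primitive_interval (by rw [← huicc]; exact hfint)
  have hdiff : ∀ u v : ℝ, u ∈ Icc (0:ℝ) 1 → v ∈ Icc (0:ℝ) 1 → u ≤ v →
      g v - g u = ∫ x in u..v, f x := by
    intro u v hu hv huv
    have h2 := intervalIntegral.integral_add_adjacent_intervals
      (hii 0 u (left_mem_Icc.2 zero_le_one) hu hu.1)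
      (hii u v hu hv huv)
    have hgu : g u = ∫ s in (0:ℝ)..u, f s := by rw [hgdef]
    have hgv : g v = ∫ s in (0:ℝ)..v, f s := by rw [hgdef]
    rw [hgu, hgv]
    linarith
  -- slope facts
  have hMinv : (0:ℝ) < 1/M - 1/m := by
    have h1 : 1/m < 0 := one_div_neg.2 hm
    have h2 : 0 < 1/M := by positivity
    linarith
  have hm0 : m ≠ 0 := hm.ne
  have hM0 : M ≠ 0 := hM.ne'
  have hMm0 : M - m ≠ 0 := hMm.ne'
  have hck : (1/M - 1/m) * c = 1 := by
    rw [hc]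
    field_simp
    ring
  -- distribution bound
  have hdist : ∀ t : ℝ, 0 < t →
      volume {x | x ∈ Icc (0:ℝ) 1 ∧ t < |g x|} ≤ ENNReal.ofReal (1 - t/M + t/m) := by
    intro t ht
    set W : Set ℝ := Icc (0:ℝ) 1 ∩ g ⁻¹' (Icc (-t) t) with hW
    have hWclosed : IsClosed W :=
      hgcont.preimage_isClosed_of_isClosed isClosed_Icc isClosed_Icc
    have hWmeas : MeasurableSet W := hWclosed.measurableSet
    have hWsub : W ⊆ Icc 0 1 := inter_subset_left
    have hWfin : volume W ≤ ENNReal.ofReal 1 := by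
      have h := measure_mono hWsub (μ := volume)
      rwa [Real.volume_Icc, sub_zero] at h
    have hWne : volume W ≠ ⊤ :=
      (lt_of_le_of_lt hWfin (by norm_num)).ne
    have hSdiff : {x | x ∈ Icc (0:ℝ) 1 ∧ t < |g x|} = Icc (0:ℝ) 1 \ W := by
      ext x
      simp only [mem_setOf_eq, mem_diff]
      constructor
      · rintro ⟨hx, hgx⟩
        refine ⟨hx, fun hxW => ?_⟩
        have habs : |g x| ≤ t := abs_le.mpr hxW.2
        linarith
      · rintro ⟨hx, hxW⟩
        refine ⟨hx, ?_⟩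
        by_contra h
        push_neg at h
        exact hxW ⟨hx, abs_le.mp h⟩
    rw [hSdiff]
    by_cases hSne : (Icc (0:ℝ) 1 \ W).Nonempty
    · obtain ⟨x₀, hx₀Icc, hx₀W⟩ := hSne
      have hx₀ : t < |g x₀| := by
        by_contra h
        push_neg at h
        exact hx₀W ⟨hx₀Icc, abs_le.mp h⟩
      have hIooW : ∀ u v : ℝ, u ∈ Icc (0:ℝ) 1 → v ∈ Icc (0:ℝ) 1 →
          (∀ z ∈ Ioo u v, 0 < g z ∧ g z < t) → Ioo u v ⊆ W := by
        intro u v hu hv hmid z hz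
        obtain ⟨h1, h2⟩ := hmid z hz
        exact ⟨⟨hu.1.trans hz.1.le, hz.2.le.trans hv.2⟩, ⟨by linarith, h2.le⟩⟩
      have hIooW' : ∀ u v : ℝ, u ∈ Icc (0:ℝ) 1 → v ∈ Icc (0:ℝ) 1 →
          (∀ z ∈ Ioo u v, 0 < -g z ∧ -g z < t) → Ioo u v ⊆ W := by
        intro u v hu hv hmid z hz
        obtain ⟨h1, h2⟩ := hmid z hz
        exact ⟨⟨hu.1.trans hz.1.le, hz.2.le.trans hv.2⟩, ⟨by linarith, by linarith⟩⟩
      have hP : (∃ u v, u ≤ v ∧ u ∈ Icc (0:ℝ) 1 ∧ v ∈ Icc (0:ℝ) 1 ∧ Ioo u v ⊆ W ∧ t ≤ g v - g u)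
          ∧ (∃ u v, u ≤ v ∧ u ∈ Icc (0:ℝ) 1 ∧ v ∈ Icc (0:ℝ) 1 ∧ Ioo u v ⊆ W ∧ g v - g u ≤ -t) := by
        rcases lt_abs.mp hx₀ with hpos | hneg
        · obtain ⟨u, v, hu, hv, huv, hgain, hmid⟩ :=
            ramp_left g hgcont hg0 t x₀ ht hx₀Icc hpos
          obtain ⟨u', v', hu', hv', huv', hgain', hmid'⟩ :=
            ramp_right g hgcont hg1 t x₀ ht hx₀Icc hpos
          exact ⟨⟨u, v, huv, hu, hv, hIooW u v hu hv hmid, hgain⟩,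
                 ⟨u', v', huv', hu', hv', hIooW u' v' hu' hv' hmid', hgain'⟩⟩
        · have hngcont : ContinuousOn (fun x => -g x) (Icc (0:ℝ) 1) := hgcont.neg
          have hng0 : -g 0 = 0 := by rw [hg0]; ring
          have hng1 : -g 1 = 0 := by rw [hg1]; ring
          obtain ⟨u, v, hu, hv, huv, hgain, hmid⟩ :=
            ramp_left (fun x => -g x) hngcont hng0 t x₀ ht hx₀Icc hneg
          obtain ⟨u', v', hu', hv', huv', hgain', hmid'⟩ :=
            ramp_right (fun x => -g x) hngcont hng1 t x₀ ht hx₀Icc hneg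
          have hgain2 : t ≤ -g v - (-g u) := hgain
          have hgain2' : -g v' - (-g u') ≤ -t := hgain'
          exact ⟨⟨u', v', huv', hu', hv', hIooW' u' v' hu' hv' hmid', by linarith⟩,
                 ⟨u, v, huv, hu, hv, hIooW' u v hu hv hmid, by linarith⟩⟩
      obtain ⟨⟨u, v, huv, hu, hv, hIW, hgain⟩, ⟨u', v', huv', hu', hv', hIW', hgain'⟩⟩ := hP
      have hplus : ENNReal.ofReal (t / M) ≤ volume (W ∩ {x | 0 < f x}) := by
        apply key_step f hmeas hfint M hM ?_ W hWmeas hWsub t u v huv hu hv hIW ?_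
        · filter_upwards [hbound] with x hx using hx.2
        · rw [← hdiff u v hu hv huv]; exact hgain
      have hminus : ENNReal.ofReal (t / (-m)) ≤ volume (W ∩ {x | 0 < -f x}) := by
        apply key_step (fun x => -f x) hmeas.neg hfint.neg (-m) (by linarith) ?_
          W hWmeas hWsub t u' v' huv' hu' hv' hIW' ?_
        · filter_upwards [hbound] with x hx
          show -f x ≤ -m
          linarith [hx.1]
        · rw [intervalIntegral.integral_neg, ← hdiff u' v' hu' hv' huv']
          linarith
      have hdisj : Disjoint (W ∩ {x | 0 < f x}) (W ∩ {x | 0 < -f x}) := by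
        rw [disjoint_left]
        rintro a ⟨_, ha1⟩ ⟨_, ha2⟩
        simp only [mem_setOf_eq] at ha1 ha2
        linarith
      have hmeas2 : MeasurableSet (W ∩ {x | 0 < -f x}) :=
        hWmeas.inter (measurableSet_lt measurable_const hmeas.neg)
      have hWlow : ENNReal.ofReal (t/M) + ENNReal.ofReal (t/(-m)) ≤ volume W := by
        calc ENNReal.ofReal (t/M) + ENNReal.ofReal (t/(-m))
            ≤ volume (W ∩ {x | 0 < f x}) + volume (W ∩ {x | 0 < -f x}) :=
              add_le_add hplus hminus
          _ = volume ((W ∩ {x | 0 < f x}) ∪ (W ∩ {x | 0 < -f x})) :=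
              (measure_union hdisj hmeas2).symm
          _ ≤ volume W := measure_mono (union_subset inter_subset_left inter_subset_left)
      have hdiffvol : volume (Icc (0:ℝ) 1 \ W) = ENNReal.ofReal 1 - volume W := by
        rw [measure_diff hWsub hWmeas.nullMeasurableSet hWne, Real.volume_Icc]
        norm_num
      rw [hdiffvol]
      calc ENNReal.ofReal 1 - volume W
          ≤ ENNReal.ofReal 1 - (ENNReal.ofReal (t/M) + ENNReal.ofReal (t/(-m))) :=
            tsub_le_tsub_left hWlow _
        _ = ENNReal.ofReal 1 - ENNReal.ofReal (t/M + t/(-m)) := by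
            rw [ENNReal.ofReal_add (div_nonneg ht.le hM.le) (div_nonneg ht.le (by linarith))]
        _ = ENNReal.ofReal (1 - (t/M + t/(-m))) :=
            (ENNReal.ofReal_sub _ (by
              have : (0:ℝ) ≤ t/M := div_nonneg ht.le hM.le
              have : (0:ℝ) ≤ t/(-m) := div_nonneg ht.le (by linarith)
              linarith)).symm
        _ = ENNReal.ofReal (1 - t/M + t/m) := by
            rw [div_neg]
            ring_nf
    · rw [not_nonempty_iff_eq_empty] at hSne
      rw [hSne, measure_empty]
      exact zero_le
  -- Layer cake argument
  set μ : Measure ℝ := volume.restrict (Ioc (0:ℝ) 1) with hμ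
  have hgm : AEMeasurable (fun x => |g x|) μ :=
    (hgcont.mono Ioc_subset_Icc_self).abs.aemeasurable measurableSet_Ioc
  have habs_nn : 0 ≤ᵐ[μ] fun x => |g x| :=
    Filter.Eventually.of_forall (fun x => abs_nonneg _)
  have key := lintegral_rpow_eq_lintegral_meas_lt_mul μ habs_nn hgm hp
  -- pointwise comparison of tail measures
  have hptwise : ∀ t ∈ Ioi (0:ℝ),
      μ {a | t < |g a|} * ENNReal.ofReal (t ^ (p-1))
        ≤ ENNReal.ofReal (1 - t/M + t/m) * ENNReal.ofReal (t ^ (p-1)) := by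
    intro t ht'
    have ht : (0:ℝ) < t := ht'
    apply mul_le_mul_left
    calc μ {a | t < |g a|} = volume ({a | t < |g a|} ∩ Ioc 0 1) :=
          Measure.restrict_apply' measurableSet_Ioc
      _ ≤ volume {x | x ∈ Icc (0:ℝ) 1 ∧ t < |g x|} :=
          measure_mono (fun x hx => ⟨Ioc_subset_Icc_self hx.2, hx.1⟩)
      _ ≤ ENNReal.ofReal (1 - t/M + t/m) := hdist t ht
  have hmono : (∫⁻ t in Ioi (0:ℝ), μ {a | t < |g a|} * ENNReal.ofReal (t ^ (p-1)))
      ≤ ∫⁻ t in Ioi (0:ℝ), ENNReal.ofReal (1 - t/M + t/m) * ENNReal.ofReal (t ^ (p-1)) := by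
    apply lintegral_mono_ae
    exact (ae_restrict_iff' measurableSet_Ioi).2 (Filter.Eventually.of_forall hptwise)
  -- split the t-integral at c
  have hsplit : Ioi (0:ℝ) = Ioc 0 c ∪ Ioi c := (Ioc_union_Ioi_eq_Ioi hcpos.le).symm
  have hdisjt : Disjoint (Ioc (0:ℝ) c) (Ioi c) := by
    rw [disjoint_left]
    rintro a ⟨_, h2⟩ h3
    exact absurd h2 (not_le.mpr h3)
  have htail : (∫⁻ t in Ioi c, ENNReal.ofReal (1 - t/M + t/m) * ENNReal.ofReal (t ^ (p-1))) = 0 := by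
    have hz : ∀ᵐ t ∂volume, t ∈ Ioi c →
        ENNReal.ofReal (1 - t/M + t/m) * ENNReal.ofReal (t ^ (p-1)) = 0 := by
      apply Filter.Eventually.of_forall
      intro t htc
      have htc' : c < t := htc
      have hr : 1 - t/M + t/m ≤ 0 := by
        have h1 : c * (1/M - 1/m) ≤ t * (1/M - 1/m) :=
          mul_le_mul_of_nonneg_right htc'.le hMinv.le
        have h2 : 1 - t/M + t/m = 1 - t * (1/M - 1/m) := by ring
        have h3 : c * (1/M - 1/m) = 1 := by rw [mul_comm]; exact hck
        linarith
      rw [ENNReal.ofReal_eq_zero.2 hr, zero_mul]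
    rw [setLIntegral_congr_fun_ae measurableSet_Ioi hz]
    simp
  -- nonnegativity on (0, c]
  have hrnn : ∀ t ∈ Ioc (0:ℝ) c, (0:ℝ) ≤ 1 - t/M + t/m := by
    intro t ht'
    have h1 : t * (1/M - 1/m) ≤ c * (1/M - 1/m) :=
      mul_le_mul_of_nonneg_right ht'.2 hMinv.le
    have h2 : 1 - t/M + t/m = 1 - t * (1/M - 1/m) := by ring
    have h3 : c * (1/M - 1/m) = 1 := by rw [mul_comm]; exact hck
    linarith
  -- rewrite integrand on (0, c]
  have hEq : ∀ t ∈ Ioc (0:ℝ) c,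
      (1 - t/M + t/m) * t ^ (p-1) = t ^ (p-1) + (1/m - 1/M) * t ^ p := by
    intro t ht'
    have htp : t ^ p = t ^ (p-1) * t := by
      rw [show p = p - 1 + 1 by ring, Real.rpow_add_one ht'.1.ne']
      ring_nf
    rw [htp]
    ring
  have hi1 : IntegrableOn (fun t : ℝ => t ^ (p-1)) (Ioc 0 c) volume :=
    (intervalIntegrable_iff_integrableOn_Ioc_of_le hcpos.le).1
      (intervalIntegral.intervalIntegrable_rpow' (by linarith))
  have hi2 : IntegrableOn (fun t : ℝ => t ^ p) (Ioc 0 c) volume :=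
    (intervalIntegrable_iff_integrableOn_Ioc_of_le hcpos.le).1
      (intervalIntegral.intervalIntegrable_rpow' (by linarith))
  have hint2 : IntegrableOn (fun t : ℝ => (1 - t/M + t/m) * t ^ (p-1)) (Ioc 0 c) volume := by
    apply (hi1.add (hi2.const_mul (1/m - 1/M))).congr
    exact (ae_restrict_iff' measurableSet_Ioc).2
      (Filter.Eventually.of_forall (fun t ht' => (hEq t ht').symm))
  have hnn2 : 0 ≤ᵐ[volume.restrict (Ioc (0:ℝ) c)]
      fun t => (1 - t/M + t/m) * t ^ (p-1) := by
    apply (ae_restrict_iff' measurableSet_Ioc).2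
    apply Filter.Eventually.of_forall
    intro t ht'
    exact mul_nonneg (hrnn t ht') (Real.rpow_nonneg ht'.1.le _)
  have hseg : (∫⁻ t in Ioc (0:ℝ) c, ENNReal.ofReal (1 - t/M + t/m) * ENNReal.ofReal (t ^ (p-1)))
      = ENNReal.ofReal (∫ t in Ioc (0:ℝ) c, (1 - t/M + t/m) * t ^ (p-1)) := by
    rw [ofReal_integral_eq_lintegral_ofReal hint2 hnn2]
    apply setLIntegral_congr_fun measurableSet_Ioc
    intro t ht'
    beta_reduce
    rw [← ENNReal.ofReal_mul (hrnn t ht')]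
  -- value of the real integral
  have hval : (∫ t in Ioc (0:ℝ) c, (1 - t/M + t/m) * t ^ (p-1))
      = c ^ p / p + (1/m - 1/M) * (c ^ (p+1) / (p+1)) := by
    rw [← intervalIntegral.integral_of_le hcpos.le]
    have hEqOn : EqOn (fun t : ℝ => (1 - t/M + t/m) * t ^ (p-1))
        (fun t : ℝ => t ^ (p-1) + (1/m - 1/M) * t ^ p) (uIcc 0 c) := by
      intro t ht'
      rw [uIcc_of_le hcpos.le] at ht'
      rcases eq_or_lt_of_le ht'.1 with h0 | h0
      · simp only [← h0]
        rw [Real.zero_rpow hp.ne']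
        rcases eq_or_ne (p - 1) 0 with hp1 | hp1
        · simp [hp1]
        · rw [Real.zero_rpow hp1]
          ring
      · exact hEq t ⟨h0, ht'.2⟩
    rw [intervalIntegral.integral_congr hEqOn]
    rw [intervalIntegral.integral_add
      ((intervalIntegral.intervalIntegrable_rpow' (by linarith)))
      (((intervalIntegral.intervalIntegrable_rpow' (by linarith)).const_mul (1/m - 1/M)))]
    rw [intervalIntegral.integral_const_mul]
    rw [integral_rpow (Or.inl (by linarith : (-1:ℝ) < p - 1)),
        integral_rpow (Or.inl (by linarith : (-1:ℝ) < p))]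
    rw [Real.zero_rpow (by linarith : p - 1 + 1 ≠ 0), Real.zero_rpow (by linarith : p + 1 ≠ 0)]
    rw [show p - 1 + 1 = p by ring]
    ring
  -- arithmetic: p * (value) = c^p/(p+1)
  have harith : p * (c ^ p / p + (1/m - 1/M) * (c ^ (p+1) / (p+1))) = c ^ p / (p+1) := by
    have hcc : c ^ (p+1) = c ^ p * c := Real.rpow_add_one hcpos.ne' p
    have hck' : (1/m - 1/M) * c = -1 := by
      have : (1/m - 1/M) = -(1/M - 1/m) := by ring
      rw [this, neg_mul, hck]
    have h2 : (1/m - 1/M) * (c ^ (p+1) / (p+1)) = -(c ^ p) / (p+1) := by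
      rw [hcc, ← mul_div_assoc,
        show (1/m - 1/M) * (c ^ p * c) = ((1/m - 1/M) * c) * c ^ p by ring, hck']
      ring
    rw [h2]
    field_simp
    ring
  -- assemble the lintegral bound
  have hfinal_lint : (∫⁻ x, ENNReal.ofReal (|g x| ^ p) ∂μ) ≤ ENNReal.ofReal (c ^ p / (p+1)) := by
    rw [key]
    have hbig : (∫⁻ t in Ioi (0:ℝ), ENNReal.ofReal (1 - t/M + t/m) * ENNReal.ofReal (t ^ (p-1)))
        = ENNReal.ofReal (c ^ p / p + (1/m - 1/M) * (c ^ (p+1) / (p+1))) := by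
      rw [hsplit, lintegral_union measurableSet_Ioi hdisjt, htail, add_zero, hseg, hval]
    calc ENNReal.ofReal p * (∫⁻ t in Ioi (0:ℝ), μ {a | t < |g a|} * ENNReal.ofReal (t ^ (p-1)))
        ≤ ENNReal.ofReal p *
            (∫⁻ t in Ioi (0:ℝ), ENNReal.ofReal (1 - t/M + t/m) * ENNReal.ofReal (t ^ (p-1))) :=
          mul_le_mul_right hmono _
      _ = ENNReal.ofReal p * ENNReal.ofReal (c ^ p / p + (1/m - 1/M) * (c ^ (p+1) / (p+1))) := by
          rw [hbig]
      _ = ENNReal.ofReal (p * (c ^ p / p + (1/m - 1/M) * (c ^ (p+1) / (p+1)))) :=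
          (ENNReal.ofReal_mul hp.le).symm
      _ = ENNReal.ofReal (c ^ p / (p+1)) := by rw [harith]
  -- convert the Bochner integral
  have hmble : AEStronglyMeasurable (fun x => |g x| ^ p) μ := by
    apply AEMeasurable.aestronglyMeasurable
    exact (((hgcont.mono Ioc_subset_Icc_self).abs.rpow_const
      (fun x _ => Or.inr hp.le)).aemeasurable measurableSet_Ioc)
  have hLnn : 0 ≤ᵐ[μ] fun x => |g x| ^ p :=
    Filter.Eventually.of_forall (fun x => Real.rpow_nonneg (abs_nonneg _) p)
  have hL2 : (∫ x in Ioc (0:ℝ) 1, |g x| ^ p) = (∫⁻ x, ENNReal.ofReal (|g x| ^ p) ∂μ).toReal :=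
    integral_eq_lintegral_of_nonneg_ae hLnn hmble
  have hmain : (∫ x in (0:ℝ)..1, |g x| ^ p) ≤ c ^ p / (p + 1) := by
    rw [intervalIntegral.integral_of_le zero_le_one, hL2]
    calc (∫⁻ x, ENNReal.ofReal (|g x| ^ p) ∂μ).toReal
        ≤ (ENNReal.ofReal (c ^ p / (p+1))).toReal :=
          ENNReal.toReal_mono ENNReal.ofReal_ne_top hfinal_lint
      _ = c ^ p / (p+1) := ENNReal.toReal_ofReal (by positivity)
  -- final rpow manipulations
  have hnnI : 0 ≤ ∫ x in (0:ℝ)..1, |g x| ^ p :=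
    intervalIntegral.integral_nonneg zero_le_one
      (fun x _ => Real.rpow_nonneg (abs_nonneg _) p)
  have h1 : (∫ x in (0:ℝ)..1, |g x| ^ p) ^ (1/p) ≤ (c ^ p / (p + 1)) ^ (1/p) :=
    Real.rpow_le_rpow hnnI hmain (by positivity)
  have h2 : (c ^ p / (p + 1)) ^ (1/p) = (p+1) ^ (-(1/p)) * c := by
    rw [Real.div_rpow (Real.rpow_nonneg hcpos.le p) (by linarith)]
    have hcp : (c ^ p) ^ (1/p) = c := by
      rw [← Real.rpow_mul hcpos.le, mul_one_div, div_self hp.ne', Real.rpow_one]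
    rw [hcp, Real.rpow_neg (by linarith)]
    ring
  have hgoal : (∫ x in (0:ℝ)..1, |∫ t in (0:ℝ)..x, f t| ^ p)
      = ∫ x in (0:ℝ)..1, |g x| ^ p := by
    rw [hgdef]
  rw [hgoal]
  exact h1.trans (le_of_eq h2)
end

section
/- Let m, M be real numbers with m < 0 < M. Then for every f ∈ F_{m,M}, ∫₀¹ |J(f)(x)| dx ≤ (1/2) · (-mM)/(M-m). -/
open MeasureTheory Set

namespace L1NormAux

/-- A bounded measurable function is integrable on `[0,1]`. -/
lemma integrableOn_f {m M : ℝ} {f : ℝ → ℝ} (hmeas : Measurable f)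
    (hbound : ∀ᵐ x ∂(volume.restrict (Icc (0:ℝ) 1)), f x ∈ Icc m M) :
    IntegrableOn f (Icc (0:ℝ) 1) := by
  apply Measure.integrableOn_of_bounded (M := max M (-m)) (by simp) hmeas.aestronglyMeasurable
  filter_upwards [hbound] with x hx
  rw [Real.norm_eq_abs, abs_le]
  refine ⟨?_, hx.2.trans (le_max_left _ _)⟩
  have := le_max_right M (-m)
  linarith [hx.1]

/-- Upper bound for interval integrals of a function bounded above by `c` a.e. on `[0,1]`. -/
lemma intervalIntegral_le {c : ℝ} {f : ℝ → ℝ}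
    (hc : ∀ᵐ x ∂(volume.restrict (Icc (0:ℝ) 1)), f x ≤ c)
    (hInt : IntegrableOn f (Icc (0:ℝ) 1)) {x y : ℝ}
    (hx : 0 ≤ x) (hxy : x ≤ y) (hy : y ≤ 1) :
    (∫ t in x..y, f t) ≤ c * (y - x) := by
  have hsub : Ioc x y ⊆ Icc (0:ℝ) 1 :=
    Ioc_subset_Icc_self.trans (Icc_subset_Icc hx hy)
  rw [intervalIntegral.integral_of_le hxy]
  calc (∫ t in Ioc x y, f t) ≤ ∫ _t in Ioc x y, c :=
        setIntegral_mono_ae_restrict (hInt.mono_set hsub)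
          (integrableOn_const measure_Ioc_lt_top.ne)
          (ae_restrict_of_ae_restrict_of_subset hsub hc)
    _ = c * (y - x) := by
        rw [setIntegral_const, measureReal_def, Real.volume_Ioc, smul_eq_mul,
          ENNReal.toReal_ofReal (by linarith)]
        ring

/-- Key distribution-function estimate.  If the primitive `J` of `f` exceeds `t` somewhere in
`[0,1]`, then `J` must spend time at least `t/M` climbing through the band `(0,t)` and time at
least `t/(-m)` descending through it, so the set where `t < |J|` has measure at most
`1 - t/M - t/(-m)`. -/
lemma key {m M t : ℝ} (hm : m < 0) (hM : 0 < M) {f : ℝ → ℝ}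
    (hmeas : Measurable f)
    (hbound : ∀ᵐ x ∂(volume.restrict (Icc (0:ℝ) 1)), f x ∈ Icc m M)
    (hint : ∫ x in (0:ℝ)..1, f x = 0) (ht : 0 < t)
    (hex : ∃ x₀ ∈ Icc (0:ℝ) 1, t ≤ ∫ s in (0:ℝ)..x₀, f s) :
    (volume ({x | t < |∫ s in (0:ℝ)..x, f s|} ∩ Ioc (0:ℝ) 1)).toReal
      ≤ 1 - (t / M + t / (-m)) := by
  set J : ℝ → ℝ := fun x => ∫ s in (0:ℝ)..x, f s with hJdef
  have hInt : IntegrableOn f (Icc (0:ℝ) 1) := integrableOn_f hmeas hbound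
  have hII : ∀ x ∈ Icc (0:ℝ) 1, IntervalIntegrable f volume 0 x := fun x hx =>
    (hInt.mono_set (by rw [uIcc_of_le hx.1]; exact Icc_subset_Icc le_rfl hx.2)).intervalIntegrable
  have hJcont : ContinuousOn J (Icc (0:ℝ) 1) := by
    have := intervalIntegral.continuousOn_primitive_interval (a := (0:ℝ)) (b := 1) (μ := volume)
      (by rw [uIcc_of_le zero_le_one]; exact hInt)
    rwa [uIcc_of_le zero_le_one] at this
  have hdiff_le : ∀ x y : ℝ, 0 ≤ x → x ≤ y → y ≤ 1 → J y - J x ≤ M * (y - x) := by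
    intro x y hx hxy hy
    have := intervalIntegral_le (c := M) (f := f)
      (by filter_upwards [hbound] with z hz using hz.2) hInt hx hxy hy
    rwa [← intervalIntegral.integral_interval_sub_left (hII y ⟨le_trans hx hxy, hy⟩)
      (hII x ⟨hx, le_trans hxy hy⟩)] at this
  have hdiff_ge : ∀ x y : ℝ, 0 ≤ x → x ≤ y → y ≤ 1 → m * (y - x) ≤ J y - J x := by
    intro x y hx hxy hy
    have := intervalIntegral_le (c := -m) (f := fun z => -f z)
      (by filter_upwards [hbound] with z hz using neg_le_neg hz.1) hInt.neg hx hxy hy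
    rw [intervalIntegral.integral_neg, ← intervalIntegral.integral_interval_sub_left
      (hII y ⟨le_trans hx hxy, hy⟩) (hII x ⟨hx, le_trans hxy hy⟩)] at this
    linarith
  have hJ0 : J 0 = 0 := intervalIntegral.integral_same
  have hJ1 : J 1 = 0 := hint
  -- the set where `J ≥ t`
  set s : Set ℝ := Icc (0:ℝ) 1 ∩ J ⁻¹' Ici t with hs
  have hs_closed : IsClosed s :=
    hJcont.preimage_isClosed_of_isClosed isClosed_Icc isClosed_Ici
  obtain ⟨x₀, hx₀, hx₀t⟩ := hex
  have hs_ne : s.Nonempty := ⟨x₀, hx₀, hx₀t⟩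
  have hs_bb : BddBelow s := ⟨0, fun x hx => hx.1.1⟩
  have hs_ba : BddAbove s := ⟨1, fun x hx => hx.1.2⟩
  set b := sInf s with hbdef
  set a' := sSup s with ha'def
  have hb_mem : b ∈ s := hs_closed.csInf_mem hs_ne hs_bb
  have ha'_mem : a' ∈ s := hs_closed.csSup_mem hs_ne hs_ba
  have hba' : b ≤ a' := csInf_le_csSup hs_ne hs_bb hs_ba
  -- ascent interval
  set s₂ : Set ℝ := Icc (0:ℝ) b ∩ J ⁻¹' Iic 0 with hs2
  have hs₂_closed : IsClosed s₂ :=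
    (hJcont.mono (Icc_subset_Icc le_rfl hb_mem.1.2)).preimage_isClosed_of_isClosed
      isClosed_Icc isClosed_Iic
  have hs₂_ne : s₂.Nonempty := ⟨0, ⟨le_rfl, hb_mem.1.1⟩, by
    rw [mem_preimage, mem_Iic, hJ0]⟩
  have hs₂_ba : BddAbove s₂ := ⟨b, fun x hx => hx.1.2⟩
  set a := sSup s₂ with hadef
  have ha_mem : a ∈ s₂ := hs₂_closed.csSup_mem hs₂_ne hs₂_ba
  -- descent interval
  set s₃ : Set ℝ := Icc a' 1 ∩ J ⁻¹' Iic 0 with hs3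
  have hs₃_closed : IsClosed s₃ :=
    (hJcont.mono (Icc_subset_Icc ha'_mem.1.1 le_rfl)).preimage_isClosed_of_isClosed
      isClosed_Icc isClosed_Iic
  have hs₃_ne : s₃.Nonempty := ⟨1, ⟨ha'_mem.1.2, le_rfl⟩, by
    rw [mem_preimage, mem_Iic, hJ1]⟩
  have hs₃_bb : BddBelow s₃ := ⟨a', fun x hx => hx.1.1⟩
  set b' := sInf s₃ with hb'def
  have hb'_mem : b' ∈ s₃ := hs₃_closed.csInf_mem hs₃_ne hs₃_bb
  -- coordinates
  have ha0 : (0:ℝ) ≤ a := ha_mem.1.1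
  have hab : a ≤ b := ha_mem.1.2
  have hb1 : b ≤ 1 := hb_mem.1.2
  have ha'0 : (0:ℝ) ≤ a' := ha'_mem.1.1
  have ha'b' : a' ≤ b' := hb'_mem.1.1
  have hb'1 : b' ≤ 1 := hb'_mem.1.2
  have hJa : J a ≤ 0 := ha_mem.2
  have hJb : t ≤ J b := hb_mem.2
  have hJa' : t ≤ J a' := ha'_mem.2
  have hJb' : J b' ≤ 0 := hb'_mem.2
  -- lengths of ascent/descent intervals
  have hlen1 : t / M ≤ b - a := by
    rw [div_le_iff₀ hM]
    have := hdiff_le a b ha0 hab hb1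
    nlinarith
  have hlen2 : t / (-m) ≤ b' - a' := by
    rw [div_le_iff₀ (by linarith : (0:ℝ) < -m)]
    have := hdiff_ge a' b' ha'0 ha'b' hb'1
    nlinarith
  -- on the excursion intervals, `0 < J < t`
  have hband1 : ∀ x, a < x → x < b → 0 < J x ∧ J x < t := by
    intro x hax hxb
    constructor
    · by_contra hcon
      push_neg at hcon
      exact absurd (le_csSup hs₂_ba ⟨⟨le_trans ha0 hax.le, hxb.le⟩, hcon⟩) (not_le.2 hax)
    · by_contra hcon
      push_neg at hcon
      exact absurd (csInf_le hs_bb ⟨⟨le_trans ha0 hax.le, le_trans hxb.le hb1⟩, hcon⟩)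
        (not_le.2 hxb)
  have hband2 : ∀ x, a' < x → x < b' → 0 < J x ∧ J x < t := by
    intro x hax hxb
    constructor
    · by_contra hcon
      push_neg at hcon
      exact absurd (csInf_le hs₃_bb ⟨⟨hax.le, le_trans hxb.le hb'1⟩, hcon⟩) (not_le.2 hxb)
    · by_contra hcon
      push_neg at hcon
      exact absurd (le_csSup hs_ba ⟨⟨le_trans ha'0 hax.le, le_trans hxb.le hb'1⟩, hcon⟩)
        (not_le.2 hax)
  -- set-theoretic containment
  have hsubU : Ioo a b ∪ Ioo a' b' ⊆ Icc (0:ℝ) 1 := by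
    rintro x (hx | hx)
    · exact ⟨le_trans ha0 hx.1.le, le_trans hx.2.le hb1⟩
    · exact ⟨le_trans ha'0 hx.1.le, le_trans hx.2.le hb'1⟩
  have hAsub : {x | t < |J x|} ∩ Ioc (0:ℝ) 1 ⊆ Icc (0:ℝ) 1 \ (Ioo a b ∪ Ioo a' b') := by
    rintro x ⟨hxt, hx01⟩
    rw [mem_setOf_eq] at hxt
    refine ⟨⟨hx01.1.le, hx01.2⟩, ?_⟩
    rintro (hx | hx)
    · obtain ⟨h1, h2⟩ := hband1 x hx.1 hx.2
      rw [abs_of_pos h1] at hxt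
      exact absurd hxt (not_lt.2 h2.le)
    · obtain ⟨h1, h2⟩ := hband2 x hx.1 hx.2
      rw [abs_of_pos h1] at hxt
      exact absurd hxt (not_lt.2 h2.le)
  have hdisj : Disjoint (Ioo a b) (Ioo a' b') := by
    rw [Set.disjoint_left]
    intro x hx1 hx2
    have := hx1.2
    have := hx2.1
    linarith
  -- measure computation
  have hUvol : volume (Ioo a b ∪ Ioo a' b')
      = ENNReal.ofReal (b - a) + ENNReal.ofReal (b' - a') := by
    rw [measure_union hdisj measurableSet_Ioo, Real.volume_Ioo, Real.volume_Ioo]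
  have hIccvol : volume (Icc (0:ℝ) 1) = 1 := by simp
  have hUle : volume (Ioo a b ∪ Ioo a' b') ≤ volume (Icc (0:ℝ) 1) := measure_mono hsubU
  have hdiffv : volume (Icc (0:ℝ) 1 \ (Ioo a b ∪ Ioo a' b'))
      = volume (Icc (0:ℝ) 1) - volume (Ioo a b ∪ Ioo a' b') :=
    measure_diff hsubU (measurableSet_Ioo.union measurableSet_Ioo).nullMeasurableSet
      (lt_of_le_of_lt hUle (by rw [hIccvol]; exact ENNReal.one_lt_top)).ne
  have hmono := measure_mono (μ := volume) hAsub
  have hdrval : (volume (Icc (0:ℝ) 1 \ (Ioo a b ∪ Ioo a' b'))).toReal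
      = 1 - ((b - a) + (b' - a')) := by
    rw [hdiffv, ENNReal.toReal_sub_of_le hUle (by rw [hIccvol]; exact ENNReal.one_ne_top),
      hUvol, hIccvol, ENNReal.toReal_add ENNReal.ofReal_ne_top ENNReal.ofReal_ne_top,
      ENNReal.toReal_ofReal (by linarith), ENNReal.toReal_ofReal (by linarith)]
    simp
  show (volume ({x : ℝ | t < |J x|} ∩ Ioc (0:ℝ) 1)).toReal ≤ 1 - (t / M + t / (-m))
  have hfin : volume (Icc (0:ℝ) 1 \ (Ioo a b ∪ Ioo a' b')) ≠ ⊤ :=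
    (lt_of_le_of_lt (measure_mono diff_subset) (by rw [hIccvol]; exact ENNReal.one_lt_top)).ne
  calc (volume ({x | t < |J x|} ∩ Ioc (0:ℝ) 1)).toReal
      ≤ (volume (Icc (0:ℝ) 1 \ (Ioo a b ∪ Ioo a' b'))).toReal :=
        ENNReal.toReal_mono hfin hmono
    _ = 1 - ((b - a) + (b' - a')) := hdrval
    _ ≤ 1 - (t / M + t / (-m)) := by linarith

end L1NormAux

theorem L1_norm_inequality (m M : ℝ) (hm : m < 0) (hM : 0 < M)
    (f : ℝ → ℝ) (hmeas : Measurable f)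
    (hbound : ∀ᵐ x ∂(volume.restrict (Icc (0:ℝ) 1)), f x ∈ Icc m M)
    (hint : ∫ x in (0:ℝ)..1, f x = 0) :
    (∫ x in (0:ℝ)..1, |∫ t in (0:ℝ)..x, f t|) ≤
      (1 / 2) * (-m * M / (M - m)) := by
  have hMm : (0:ℝ) < M - m := by linarith
  have hmpos : (0:ℝ) < -m := by linarith
  set h : ℝ := -m * M / (M - m) with hh
  have hhpos : 0 < h := div_pos (mul_pos hmpos hM) hMm
  have hInt : IntegrableOn f (Icc (0:ℝ) 1) := L1NormAux.integrableOn_f hmeas hbound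
  have hJcont : ContinuousOn (fun x => ∫ t in (0:ℝ)..x, f t) (Icc (0:ℝ) 1) := by
    have := intervalIntegral.continuousOn_primitive_interval (a := (0:ℝ)) (b := 1) (μ := volume)
      (by rw [uIcc_of_le zero_le_one]; exact hInt)
    rwa [uIcc_of_le zero_le_one] at this
  have hJInt : IntegrableOn (fun x => |∫ t in (0:ℝ)..x, f t|) (Ioc (0:ℝ) 1) :=
    (hJcont.abs.integrableOn_Icc).mono_set Ioc_subset_Icc_self
  have lc := hJInt.integral_eq_integral_meas_lt (Filter.Eventually.of_forall fun x => abs_nonneg _)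
  rw [intervalIntegral.integral_of_le zero_le_one]
  rw [lc]
  simp only [measureReal_def, Measure.restrict_apply' measurableSet_Ioc]
  -- pointwise bound on the distribution function
  have hFg : ∀ t ∈ Ioi (0:ℝ),
      (volume ({a | t < |∫ s in (0:ℝ)..a, f s|} ∩ Ioc (0:ℝ) 1)).toReal
        ≤ (Ioc (0:ℝ) h).indicator (fun t => 1 - t / h) t := by
    intro t ht
    rw [mem_Ioi] at ht
    by_cases hcase : (∃ x₀ ∈ Icc (0:ℝ) 1, t ≤ ∫ s in (0:ℝ)..x₀, f s)
        ∨ (∃ x₀ ∈ Icc (0:ℝ) 1, t ≤ -∫ s in (0:ℝ)..x₀, f s)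
    · have hkey : (volume ({a | t < |∫ s in (0:ℝ)..a, f s|} ∩ Ioc (0:ℝ) 1)).toReal
          ≤ 1 - (t / M + t / (-m)) := by
        rcases hcase with hc | hc
        · exact L1NormAux.key hm hM hmeas hbound hint ht hc
        · have h2 := L1NormAux.key (m := -M) (M := -m) (t := t) (f := fun z => -f z)
            (by linarith) (by linarith) hmeas.neg
            (by filter_upwards [hbound] with z hz; exact ⟨neg_le_neg hz.2, neg_le_neg hz.1⟩)
            (by rw [intervalIntegral.integral_neg, hint, neg_zero]) ht
            (by obtain ⟨x₀, hx₀, hx₀t⟩ := hc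
                exact ⟨x₀, hx₀, by rwa [intervalIntegral.integral_neg]⟩)
          simp only [intervalIntegral.integral_neg, abs_neg, neg_neg] at h2
          linarith
      have hFnn : (0:ℝ) ≤
          (volume ({a | t < |∫ s in (0:ℝ)..a, f s|} ∩ Ioc (0:ℝ) 1)).toReal :=
        ENNReal.toReal_nonneg
      have hsum : t / M + t / (-m) ≤ 1 := by linarith
      have hfh : t / M + t / (-m) = t / h := by
        rw [hh, div_add_div _ _ hM.ne' hmpos.ne', div_div_eq_mul_div,
          div_eq_div_iff (mul_ne_zero hM.ne' hmpos.ne') (mul_ne_zero hmpos.ne' hM.ne')]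
        ring
      have hth : t ≤ h := by
        have h1 : t / h ≤ 1 := by rw [← hfh]; exact hsum
        calc t = t / h * h := by field_simp
          _ ≤ 1 * h := by nlinarith
          _ = h := one_mul h
      rw [Set.indicator_of_mem (mem_Ioc.mpr ⟨ht, hth⟩) (fun t => 1 - t / h), ← hfh]
      exact hkey
    · push_neg at hcase
      obtain ⟨h1, h2⟩ := hcase
      have hempty : {a | t < |∫ s in (0:ℝ)..a, f s|} ∩ Ioc (0:ℝ) 1 = ∅ := by
        ext x
        simp only [mem_inter_iff, mem_setOf_eq, mem_empty_iff_false, iff_false]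
        rintro ⟨hxt, hx01⟩
        rcases abs_cases (∫ s in (0:ℝ)..x, f s) with ⟨heq, _⟩ | ⟨heq, _⟩
        · rw [heq] at hxt
          linarith [h1 x ⟨hx01.1.le, hx01.2⟩]
        · rw [heq] at hxt
          linarith [h2 x ⟨hx01.1.le, hx01.2⟩]
      rw [hempty]
      simp only [measure_empty, ENNReal.toReal_zero]
      exact indicator_nonneg (fun y hy => by
        have : y / h ≤ 1 := (div_le_one hhpos).2 hy.2
        linarith) t
  have hgInt : IntegrableOn ((Ioc (0:ℝ) h).indicator (fun t => 1 - t / h)) (Ioi (0:ℝ)) := by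
    rw [IntegrableOn, integrable_indicator_iff measurableSet_Ioc]
    rw [IntegrableOn, Measure.restrict_restrict measurableSet_Ioc,
      inter_eq_self_of_subset_left Ioc_subset_Ioi_self]
    exact Continuous.integrableOn_Ioc (by continuity)
  calc (∫ t in Ioi (0:ℝ),
        (volume ({a | t < |∫ s in (0:ℝ)..a, f s|} ∩ Ioc (0:ℝ) 1)).toReal)
      ≤ ∫ t in Ioi (0:ℝ), (Ioc (0:ℝ) h).indicator (fun t => 1 - t / h) t :=
        integral_mono_of_nonneg (Filter.Eventually.of_forall fun t => ENNReal.toReal_nonneg) hgInt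
          ((ae_restrict_iff' measurableSet_Ioi).2 (Filter.Eventually.of_forall hFg))
    _ = ∫ t in Ioc (0:ℝ) h, (1 - t / h) := by
        rw [setIntegral_indicator measurableSet_Ioc,
          inter_eq_self_of_subset_right Ioc_subset_Ioi_self]
    _ = ∫ t in (0:ℝ)..h, (1 - t / h) := (intervalIntegral.integral_of_le hhpos.le).symm
    _ = 1 / 2 * h := by
        rw [intervalIntegral.integral_sub intervalIntegrable_const
          ((continuous_id'.div_const h).intervalIntegrable 0 h),
          intervalIntegral.integral_div, integral_id, intervalIntegral.integral_const]
        field_simp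
        ring
end

section
/- Let m, M be real numbers with m < 0 < M. Then for every f ∈ F_{m,M}, (∫₀¹ (J(f)(x))² dx)^{1/2} ≤ (1/√3) · (-mM)/(M-m). -/
open MeasureTheory Set

private lemma glob_intervalIntegrable {m M : ℝ} {g : ℝ → ℝ} (hmeas : Measurable g)
    (hb : ∀ x, g x ∈ Icc m M) (u v : ℝ) : IntervalIntegrable g volume u v := by
  rw [intervalIntegrable_iff]
  have hK : ∀ x, ‖g x‖ ≤ max M (-m) := by
    intro x
    rw [Real.norm_eq_abs, abs_le]
    exact ⟨by linarith [le_max_right M (-m), (hb x).1],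
      le_trans (hb x).2 (le_max_left _ _)⟩
  have hfin : volume (Set.uIoc u v) < ⊤ := by
    rw [Set.uIoc, Real.volume_Ioc]; exact ENNReal.ofReal_lt_top
  exact Integrable.mono' (integrableOn_const hfin.ne)
    hmeas.aestronglyMeasurable (Filter.Eventually.of_forall hK)

/-- Core lemma: if `J x₀ > s` for some `x₀ ∈ [0,1]`, then the set where `|J| > s`
has measure at most `1 - s/M - s/(-m)`. -/
private lemma core_meas (m M : ℝ) (hm : m < 0) (hM : 0 < M) (g : ℝ → ℝ) (hmeas : Measurable g)
    (hb : ∀ x, g x ∈ Icc m M) (hint : (∫ t in (0:ℝ)..1, g t) = 0)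
    (s : ℝ) (hs : 0 < s) (x₀ : ℝ) (hx₀ : x₀ ∈ Icc (0:ℝ) 1)
    (hJx₀ : s < ∫ t in (0:ℝ)..x₀, g t) :
    volume {x | x ∈ Icc (0:ℝ) 1 ∧ s < |∫ t in (0:ℝ)..x, g t|} ≤
      ENNReal.ofReal (1 - s * ((M - m) / (-m * M))) := by
  have ha : (0:ℝ) < -m := by linarith
  set J : ℝ → ℝ := fun x => ∫ t in (0:ℝ)..x, g t with hJdef
  have hii : ∀ u v : ℝ, IntervalIntegrable g volume u v := glob_intervalIntegrable hmeas hb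
  have hJc : Continuous J := intervalIntegral.continuous_primitive hii 0
  have hstepM : ∀ u v : ℝ, u ≤ v → J v - J u ≤ M * (v - u) := by
    intro u v huv
    have h1 : J v - J u = ∫ t in u..v, g t :=
      intervalIntegral.integral_interval_sub_left (hii 0 v) (hii 0 u)
    have h2 : (∫ t in u..v, g t) ≤ ∫ _t in u..v, M := by
      apply intervalIntegral.integral_mono_on huv (hii u v)
        (intervalIntegrable_const)
      exact fun x _ => (hb x).2
    rw [intervalIntegral.integral_const] at h2
    rw [h1]
    calc (∫ t in u..v, g t) ≤ (v - u) • M := h2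
    _ = M * (v - u) := by rw [smul_eq_mul]; ring
  have hstepm : ∀ u v : ℝ, u ≤ v → m * (v - u) ≤ J v - J u := by
    intro u v huv
    have h1 : J v - J u = ∫ t in u..v, g t :=
      intervalIntegral.integral_interval_sub_left (hii 0 v) (hii 0 u)
    have h2 : (∫ _t in u..v, m) ≤ ∫ t in u..v, g t := by
      apply intervalIntegral.integral_mono_on huv (intervalIntegrable_const) (hii u v)
      exact fun x _ => (hb x).1
    rw [intervalIntegral.integral_const] at h2
    rw [h1]
    calc m * (v - u) = (v - u) • m := by rw [smul_eq_mul]; ring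
    _ ≤ ∫ t in u..v, g t := h2
  have hJ0 : J 0 = 0 := intervalIntegral.integral_same
  have hJ1 : J 1 = 0 := hint
  -- the last zero before x₀
  set T : Set ℝ := Icc 0 x₀ ∩ {t | J t ≤ 0} with hTdef
  have hTne : T.Nonempty := ⟨0, ⟨le_refl 0, hx₀.1⟩, le_of_eq hJ0⟩
  have hTbdd : BddAbove T := ⟨x₀, fun t ht => ht.1.2⟩
  have hTclosed : IsClosed T := isClosed_Icc.inter (isClosed_le hJc continuous_const)
  set α := sSup T with hαdef
  have hαT : α ∈ T := hTclosed.csSup_mem hTne hTbdd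
  have hα0 : 0 ≤ α := hαT.1.1
  have hαx₀ : α ≤ x₀ := hαT.1.2
  have hJα_le : J α ≤ 0 := hαT.2
  have hαlt : α < x₀ := by
    rcases lt_or_eq_of_le hαx₀ with h | h
    · exact h
    · exfalso; rw [h] at hJα_le; linarith
  have hJpos : ∀ t, α < t → t ≤ x₀ → 0 < J t := by
    intro t h1 h2
    by_contra h
    push_neg at h
    have : t ∈ T := ⟨⟨le_trans hα0 h1.le, h2⟩, h⟩
    exact absurd (le_csSup hTbdd this) (not_le.2 h1)
  have hJα : J α = 0 := by
    rcases lt_or_eq_of_le hJα_le with h | h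
    · exfalso
      have hIVT := intermediate_value_Ioo hαlt.le (hJc.continuousOn (s := Icc α x₀))
      have h0mem : (0:ℝ) ∈ Ioo (J α) (J x₀) := ⟨h, lt_trans hs hJx₀⟩
      obtain ⟨c, hc, hc0⟩ := hIVT h0mem
      have : c ∈ T := ⟨⟨le_trans hα0 hc.1.le, hc.2.le⟩, le_of_eq hc0⟩
      exact absurd (le_csSup hTbdd this) (not_le.2 hc.1)
    · exact h
  -- the first zero after x₀
  set T' : Set ℝ := Icc x₀ 1 ∩ {t | J t ≤ 0} with hT'def
  have hT'ne : T'.Nonempty := ⟨1, ⟨hx₀.2, le_refl 1⟩, le_of_eq hJ1⟩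
  have hT'bdd : BddBelow T' := ⟨x₀, fun t ht => ht.1.1⟩
  have hT'closed : IsClosed T' := isClosed_Icc.inter (isClosed_le hJc continuous_const)
  set β := sInf T' with hβdef
  have hβT' : β ∈ T' := hT'closed.csInf_mem hT'ne hT'bdd
  have hβx₀ : x₀ ≤ β := hβT'.1.1
  have hβ1 : β ≤ 1 := hβT'.1.2
  have hJβ_le : J β ≤ 0 := hβT'.2
  have hβgt : x₀ < β := by
    rcases lt_or_eq_of_le hβx₀ with h | h
    · exact h
    · exfalso; rw [← h] at hJβ_le; linarith
  have hJpos' : ∀ t, x₀ ≤ t → t < β → 0 < J t := by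
    intro t h1 h2
    by_contra h
    push_neg at h
    have : t ∈ T' := ⟨⟨h1, le_trans h2.le hβ1⟩, h⟩
    exact absurd (csInf_le hT'bdd this) (not_le.2 h2)
  have hJβ : J β = 0 := by
    rcases lt_or_eq_of_le hJβ_le with h | h
    · exfalso
      have hIVT := intermediate_value_Ioo' hβgt.le (hJc.continuousOn (s := Icc x₀ β))
      have h0mem : (0:ℝ) ∈ Ioo (J β) (J x₀) := ⟨h, lt_trans hs hJx₀⟩
      obtain ⟨c, hc, hc0⟩ := hIVT h0mem
      have : c ∈ T' := ⟨⟨hc.1.le, le_trans hc.2.le hβ1⟩, le_of_eq hc0⟩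
      exact absurd (csInf_le hT'bdd this) (not_le.2 hc.2)
    · exact h
  -- key position bounds
  have hkey1 : s < M * (x₀ - α) := by
    have := hstepM α x₀ hαlt.le
    rw [hJα] at this
    linarith
  have hkey2 : s < -m * (β - x₀) := by
    have := hstepm x₀ β hβgt.le
    rw [hJβ] at this
    linarith
  have hαsM : α + s / M < x₀ := by
    have : s / M < x₀ - α := by rw [div_lt_iff₀ hM]; linarith [hkey1]
    linarith
  have hβsa : x₀ < β - s / (-m) := by
    have : s / (-m) < β - x₀ := by rw [div_lt_iff₀ ha]; linarith [hkey2]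
    linarith
  -- the two intervals where J is small and positive
  have hI1 : ∀ x ∈ Ioo α (α + s / M), |J x| < s := by
    intro x hx
    have hxx₀ : x < x₀ := lt_trans hx.2 hαsM
    have h1 : 0 < J x := hJpos x hx.1 hxx₀.le
    have h2 : J x ≤ M * (x - α) := by
      have := hstepM α x hx.1.le
      rw [hJα] at this; linarith
    have h3 : M * (x - α) < s := by
      have hd : x - α < s / M := by linarith [hx.2]
      exact (lt_div_iff₀' hM).1 hd
    rw [abs_of_pos h1]; linarith
  have hI2 : ∀ x ∈ Ioo (β - s / (-m)) β, |J x| < s := by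
    intro x hx
    have hxx₀ : x₀ < x := lt_trans hβsa hx.1
    have h1 : 0 < J x := hJpos' x hxx₀.le hx.2
    have h2 : J x ≤ -m * (β - x) := by
      have := hstepm x β hx.2.le
      rw [hJβ] at this; linarith
    have h3 : -m * (β - x) < s := by
      have hd : β - x < s / (-m) := by linarith [hx.1]
      exact (lt_div_iff₀' ha).1 hd
    rw [abs_of_pos h1]; linarith
  -- measure estimate
  set U : Set ℝ := Ioo α (α + s / M) ∪ Ioo (β - s / (-m)) β with hUdef
  have hUsub : U ⊆ Icc 0 1 := by
    rintro x (hx | hx)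
    · exact ⟨le_trans hα0 hx.1.le, le_trans (le_trans hx.2.le hαsM.le) hx₀.2⟩
    · exact ⟨le_trans hx₀.1 (le_trans hβsa.le hx.1.le), le_trans hx.2.le hβ1⟩
  have hdisj : Disjoint (Ioo α (α + s / M)) (Ioo (β - s / (-m)) β) := by
    rw [Set.disjoint_left]
    intro x h1 h2
    exact absurd (lt_trans (lt_trans h1.2 hαsM) (lt_trans hβsa h2.1)) (lt_irrefl x)
  have hSsub : {x | x ∈ Icc (0:ℝ) 1 ∧ s < |J x|} ⊆ Icc 0 1 \ U := by
    rintro x ⟨hx1, hx2⟩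
    refine ⟨hx1, ?_⟩
    rintro (hx | hx)
    · exact absurd hx2 (not_lt.2 (hI1 x hx).le)
    · exact absurd hx2 (not_lt.2 (hI2 x hx).le)
  have hUmeas : MeasurableSet U := (measurableSet_Ioo).union measurableSet_Ioo
  have hUvol : volume U = ENNReal.ofReal (s / M + s / (-m)) := by
    rw [hUdef, measure_union hdisj measurableSet_Ioo, Real.volume_Ioo, Real.volume_Ioo,
      show α + s / M - α = s / M by ring, show β - (β - s / -m) = s / -m by ring,
      ← ENNReal.ofReal_add (div_nonneg hs.le hM.le) (div_nonneg hs.le ha.le)]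
  calc volume {x | x ∈ Icc (0:ℝ) 1 ∧ s < |J x|}
      ≤ volume (Icc (0:ℝ) 1 \ U) := measure_mono hSsub
    _ = volume (Icc (0:ℝ) 1) - volume U := by
        apply measure_diff hUsub hUmeas.nullMeasurableSet
        rw [hUvol]; exact ENNReal.ofReal_ne_top
    _ = ENNReal.ofReal 1 - ENNReal.ofReal (s / M + s / (-m)) := by
        rw [hUvol, Real.volume_Icc]; norm_num
    _ = ENNReal.ofReal (1 - (s / M + s / (-m))) := by
        rw [ENNReal.ofReal_sub _ (by positivity)]
    _ = ENNReal.ofReal (1 - s * ((M - m) / (-m * M))) := by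
        congr 1
        have hM0 : M ≠ 0 := ne_of_gt hM
        have hm0 : m ≠ 0 := ne_of_lt hm
        field_simp
        ring

/-- Measure bound for both signs. -/
private lemma meas_bound (m M : ℝ) (hm : m < 0) (hM : 0 < M) (g : ℝ → ℝ) (hmeas : Measurable g)
    (hb : ∀ x, g x ∈ Icc m M) (hint : (∫ t in (0:ℝ)..1, g t) = 0)
    (s : ℝ) (hs : 0 < s) :
    volume {x | x ∈ Icc (0:ℝ) 1 ∧ s < |∫ t in (0:ℝ)..x, g t|} ≤
      ENNReal.ofReal (1 - s * ((M - m) / (-m * M))) := by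
  rcases Set.eq_empty_or_nonempty {x | x ∈ Icc (0:ℝ) 1 ∧ s < |∫ t in (0:ℝ)..x, g t|} with h | h
  · rw [h]; simp
  · obtain ⟨x₀, hx₀, habs⟩ := h
    rcases lt_abs.1 habs with hpos | hneg
    · exact core_meas m M hm hM g hmeas hb hint s hs x₀ hx₀ hpos
    · have hbneg : ∀ x, -g x ∈ Icc (-M) (-m) :=
        fun x => ⟨neg_le_neg (hb x).2, neg_le_neg (hb x).1⟩
      have hintneg : (∫ t in (0:ℝ)..1, -g t) = 0 := by
        rw [intervalIntegral.integral_neg, hint, neg_zero]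
      have hJneg : s < ∫ t in (0:ℝ)..x₀, -g t := by
        rw [intervalIntegral.integral_neg]; exact hneg
      have := core_meas (-M) (-m) (by linarith) (by linarith) (fun x => -g x) hmeas.neg
        hbneg hintneg s hs x₀ hx₀ hJneg
      have hset : {x | x ∈ Icc (0:ℝ) 1 ∧ s < |∫ t in (0:ℝ)..x, -g t|} =
          {x | x ∈ Icc (0:ℝ) 1 ∧ s < |∫ t in (0:ℝ)..x, g t|} := by
        ext x
        rw [mem_setOf_eq, mem_setOf_eq, intervalIntegral.integral_neg, abs_neg]
      have hconst : (1 - s * ((-m - -M) / (- -M * -m))) = (1 - s * ((M - m) / (-m * M))) := by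
        ring_nf
      rw [hset, hconst] at this
      exact this

/-- The squared L² bound. -/
private lemma int_sq_bound (m M : ℝ) (hm : m < 0) (hM : 0 < M) (g : ℝ → ℝ) (hmeas : Measurable g)
    (hb : ∀ x, g x ∈ Icc m M) (hint : (∫ t in (0:ℝ)..1, g t) = 0) :
    (∫ x in (0:ℝ)..1, (∫ t in (0:ℝ)..x, g t) ^ 2) ≤ (-m * M / (M - m)) ^ 2 / 3 := by
  set C : ℝ := -m * M / (M - m) with hCdef
  have hC : 0 < C := div_pos (by nlinarith) (by linarith)
  have hCinv : (M - m) / (-m * M) = 1 / C := by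
    rw [hCdef]; rw [one_div_div]
  set J : ℝ → ℝ := fun x => ∫ t in (0:ℝ)..x, g t with hJdef
  have hii : ∀ u v : ℝ, IntervalIntegrable g volume u v := glob_intervalIntegrable hmeas hb
  have hJc : Continuous J := intervalIntegral.continuous_primitive hii 0
  have hJsqc : Continuous (fun x => (J x) ^ 2) := hJc.pow 2
  have hintg : Integrable (fun x => (J x) ^ 2) (volume.restrict (Ioc (0:ℝ) 1)) :=
    hJsqc.integrableOn_Ioc
  have hmaj : ∀ t : ℝ, t ∈ Ioi (0:ℝ) →
      ((volume.restrict (Ioc (0:ℝ) 1)) {a | t < (J a) ^ 2}).toReal ≤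
        max 0 (1 - Real.sqrt t * (1 / C)) := by
    intro t ht
    have htpos : (0:ℝ) < t := ht
    have hmeasset : MeasurableSet {a : ℝ | t < (J a) ^ 2} :=
      measurableSet_lt measurable_const (hJsqc.measurable)
    rw [Measure.restrict_apply hmeasset]
    have hsubset : {a : ℝ | t < (J a) ^ 2} ∩ Ioc 0 1 ⊆
        {x | x ∈ Icc (0:ℝ) 1 ∧ Real.sqrt t < |J x|} := by
      rintro x ⟨hx1, hx2⟩
      refine ⟨Ioc_subset_Icc_self hx2, ?_⟩
      have : Real.sqrt t < Real.sqrt ((J x) ^ 2) := Real.sqrt_lt_sqrt htpos.le hx1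
      rwa [Real.sqrt_sq_eq_abs] at this
    have hsq : (0:ℝ) < Real.sqrt t := Real.sqrt_pos.2 htpos
    have hbound := meas_bound m M hm hM g hmeas hb hint (Real.sqrt t) hsq
    rw [hCinv] at hbound
    have h1 : volume ({a : ℝ | t < (J a) ^ 2} ∩ Ioc 0 1) ≤
        ENNReal.ofReal (1 - Real.sqrt t * (1 / C)) :=
      le_trans (measure_mono hsubset) hbound
    calc (volume ({a : ℝ | t < (J a) ^ 2} ∩ Ioc 0 1)).toReal
        ≤ (ENNReal.ofReal (1 - Real.sqrt t * (1 / C))).toReal :=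
          ENNReal.toReal_mono ENNReal.ofReal_ne_top h1
      _ ≤ max 0 (1 - Real.sqrt t * (1 / C)) := by
          rcases le_or_gt 0 (1 - Real.sqrt t * (1 / C)) with h | h
          · rw [ENNReal.toReal_ofReal h]; exact le_max_right _ _
          · rw [ENNReal.ofReal_of_nonpos h.le]; simp
  -- integrability and value of the majorant
  set maj : ℝ → ℝ := fun t => max 0 (1 - Real.sqrt t * (1 / C)) with hmajdef
  have hmajc : Continuous maj :=
    continuous_const.max (continuous_const.sub (Real.continuous_sqrt.mul continuous_const))
  have hzero : ∀ t ∈ Ioi (C ^ 2), maj t = 0 := by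
    intro t ht
    have h1 : C ≤ Real.sqrt t := by
      rw [show C = Real.sqrt (C ^ 2) by rw [Real.sqrt_sq hC.le]]
      exact Real.sqrt_le_sqrt (le_of_lt ht)
    have h2 : 1 - Real.sqrt t * (1 / C) ≤ 0 := by
      have : 1 ≤ Real.sqrt t * (1 / C) := by
        rw [mul_one_div, le_div_iff₀ hC, one_mul]; exact h1
      linarith
    exact max_eq_left h2
  have hmaj_int : IntegrableOn maj (Ioi (0:ℝ)) := by
    have hsplit : Ioi (0:ℝ) = Ioc 0 (C ^ 2) ∪ Ioi (C ^ 2) :=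
      (Set.Ioc_union_Ioi_eq_Ioi (by positivity)).symm
    rw [hsplit]
    apply IntegrableOn.union
    · exact hmajc.integrableOn_Ioc
    · apply (integrableOn_congr_fun _ measurableSet_Ioi).2 (integrableOn_zero)
      intro t ht
      exact (hzero t ht)
  have hmaj_val : ∫ t in Ioi (0:ℝ), maj t = C ^ 2 / 3 := by
    have hsplit : Ioi (0:ℝ) = Ioc 0 (C ^ 2) ∪ Ioi (C ^ 2) :=
      (Set.Ioc_union_Ioi_eq_Ioi (by positivity)).symm
    have hdisj : Disjoint (Ioc (0:ℝ) (C ^ 2)) (Ioi (C ^ 2)) := by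
      rw [Set.disjoint_left]
      intro x h1 h2
      exact absurd h1.2 (not_le.2 h2)
    rw [hsplit, setIntegral_union hdisj measurableSet_Ioi hmajc.integrableOn_Ioc
      ((integrableOn_congr_fun (fun t ht => hzero t ht) measurableSet_Ioi).2 integrableOn_zero)]
    have h2 : ∫ t in Ioi (C ^ 2), maj t = 0 := by
      rw [setIntegral_congr_fun measurableSet_Ioi (fun t ht => hzero t ht)]
      simp
    rw [h2, add_zero]
    have h3 : ∫ t in Ioc (0:ℝ) (C ^ 2), maj t = ∫ t in (0:ℝ)..(C ^ 2), maj t := by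
      rw [intervalIntegral.integral_of_le (by positivity)]
    rw [h3]
    have h4 : ∫ t in (0:ℝ)..(C ^ 2), maj t
        = ∫ t in (0:ℝ)..(C ^ 2), (1 - Real.sqrt t * (1 / C)) := by
      apply intervalIntegral.integral_congr
      intro t ht
      rw [Set.uIcc_of_le (by positivity)] at ht
      have h5 : Real.sqrt t ≤ C := by
        rw [show C = Real.sqrt (C ^ 2) by rw [Real.sqrt_sq hC.le]]
        exact Real.sqrt_le_sqrt ht.2
      have h6 : Real.sqrt t * (1 / C) ≤ 1 := by
        rw [mul_one_div, div_le_iff₀ hC, one_mul]; exact h5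
      exact max_eq_right (by linarith)
    rw [h4]
    have hsqrt_ii : IntervalIntegrable (fun t => Real.sqrt t * (1 / C)) volume 0 (C ^ 2) :=
      (Real.continuous_sqrt.mul continuous_const).intervalIntegrable _ _
    rw [intervalIntegral.integral_sub (intervalIntegrable_const) hsqrt_ii]
    have h7 : ∫ t in (0:ℝ)..(C ^ 2), Real.sqrt t * (1 / C)
        = (∫ t in (0:ℝ)..(C ^ 2), Real.sqrt t) * (1 / C) := by
      rw [← intervalIntegral.integral_mul_const]
    have h8 : ∫ t in (0:ℝ)..(C ^ 2), Real.sqrt t = 2 / 3 * C ^ 3 := by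
      have h9 : ∫ t in (0:ℝ)..(C ^ 2), Real.sqrt t
          = ∫ t in (0:ℝ)..(C ^ 2), t ^ ((1:ℝ)/2) := by
        apply intervalIntegral.integral_congr
        intro t _
        exact Real.sqrt_eq_rpow t
      rw [h9, integral_rpow (Or.inl (by norm_num))]
      have h10 : ((C ^ 2 : ℝ)) ^ ((1:ℝ)/2 + 1) = C ^ 3 := by
        rw [← Real.rpow_natCast C 2, ← Real.rpow_mul hC.le]
        norm_num
      rw [h10]
      have h11 : ((0:ℝ)) ^ ((1:ℝ)/2 + 1) = 0 := by
        rw [Real.zero_rpow (by norm_num)]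
      rw [h11]
      ring
    rw [h7, h8, intervalIntegral.integral_const]
    field_simp
    ring
  -- final chain
  have hgoal : (∫ x in (0:ℝ)..1, (J x) ^ 2) ≤ C ^ 2 / 3 := by
    rw [intervalIntegral.integral_of_le (zero_le_one)]
    rw [MeasureTheory.Integrable.integral_eq_integral_meas_lt hintg
      (Filter.Eventually.of_forall (fun x => sq_nonneg _))]
    refine le_trans (integral_mono_of_nonneg
      (Filter.Eventually.of_forall (fun t => ENNReal.toReal_nonneg)) hmaj_int ?_) ?_
    · apply (ae_restrict_iff' measurableSet_Ioi).2
      exact Filter.Eventually.of_forall hmaj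
    · rw [hmaj_val]
  exact hgoal

theorem L2_norm_inequality (m M : ℝ) (hm : m < 0) (hM : 0 < M)
    (f : ℝ → ℝ) (hmeas : Measurable f)
    (hbound : ∀ᵐ x ∂(volume.restrict (Icc (0:ℝ) 1)), f x ∈ Icc m M)
    (hint : ∫ x in (0:ℝ)..1, f x = 0) :
    (∫ x in (0:ℝ)..1, (∫ t in (0:ℝ)..x, f t) ^ 2) ^ ((1:ℝ) / 2) ≤
      (1 / Real.sqrt 3) * (-m * M / (M - m)) := by
  set g : ℝ → ℝ := fun x => max m (min M (f x)) with hgdef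
  have hgmeas : Measurable g := measurable_const.max (measurable_const.min hmeas)
  have hgb : ∀ x, g x ∈ Icc m M :=
    fun x => ⟨le_max_left _ _, max_le (hm.le.trans hM.le) (min_le_left _ _)⟩
  have hae : ∀ᵐ x ∂(volume : Measure ℝ), x ∈ Icc (0:ℝ) 1 → f x = g x := by
    rw [← ae_restrict_iff' measurableSet_Icc]
    filter_upwards [hbound] with x hx
    rw [hgdef]
    simp only
    rw [min_eq_right hx.2, max_eq_right hx.1]
  have hJeq : ∀ x ∈ Icc (0:ℝ) 1, (∫ t in (0:ℝ)..x, f t) = ∫ t in (0:ℝ)..x, g t := by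
    intro x hx
    apply intervalIntegral.integral_congr_ae
    filter_upwards [hae] with t ht hmem
    apply ht
    rw [Set.uIoc_of_le hx.1] at hmem
    exact ⟨hmem.1.le, le_trans hmem.2 hx.2⟩
  have hint' : (∫ t in (0:ℝ)..1, g t) = 0 := by
    rw [← hJeq 1 ⟨zero_le_one, le_refl 1⟩]; exact hint
  have hIeq : (∫ x in (0:ℝ)..1, (∫ t in (0:ℝ)..x, f t) ^ 2)
      = ∫ x in (0:ℝ)..1, (∫ t in (0:ℝ)..x, g t) ^ 2 := by
    apply intervalIntegral.integral_congr
    intro x hx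
    rw [Set.uIcc_of_le zero_le_one] at hx
    simp only [hJeq x hx]
  rw [hIeq]
  set C : ℝ := -m * M / (M - m) with hCdef
  have hC : 0 < C := div_pos (by nlinarith) (by linarith)
  have hbound2 := int_sq_bound m M hm hM g hgmeas hgb hint'
  have h0 : 0 ≤ ∫ x in (0:ℝ)..1, (∫ t in (0:ℝ)..x, g t) ^ 2 :=
    intervalIntegral.integral_nonneg zero_le_one (fun x _ => sq_nonneg _)
  have h1 : (∫ x in (0:ℝ)..1, (∫ t in (0:ℝ)..x, g t) ^ 2) ^ ((1:ℝ)/2)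
      ≤ (C ^ 2 / 3) ^ ((1:ℝ)/2) := Real.rpow_le_rpow h0 hbound2 (by norm_num)
  have h2 : (C ^ 2 / 3 : ℝ) ^ ((1:ℝ)/2) = (1 / Real.sqrt 3) * C := by
    rw [← Real.sqrt_eq_rpow, Real.sqrt_div (sq_nonneg C), Real.sqrt_sq hC.le, one_div,
      inv_mul_eq_div]
  rw [h2] at h1
  exact h1
end

section
/- Let m, M be real numbers with m < 0 < M, and let f ∈ F_{m,M}. Then |∫₀¹ x f(x) dx| ≤ (1/2) · (-mM)/(M-m). -/
open MeasureTheory Set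

-- key lemma: for 0 ≤ c ≤ 1, ∫ (x-c) f ≤ -m c²/2 + M (1-c)²/2
lemma mi_key (m M c : ℝ) (f : ℝ → ℝ)
    (hmeas : Measurable f)
    (hbound : ∀ᵐ x ∂(volume.restrict (Icc (0:ℝ) 1)), f x ∈ Icc m M)
    (hc0 : 0 ≤ c) (hc1 : c ≤ 1) :
    ∫ x in (0:ℝ)..1, (x - c) * f x ≤ -m * c^2/2 + M * (1-c)^2/2 := by
  set C := max |m| |M| with hC
  have hCf : ∀ᵐ x ∂(volume.restrict (Icc (0:ℝ) 1)), ‖(x - c) * f x‖ ≤ (1 + |c|) * C := by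
    filter_upwards [hbound, ae_restrict_mem (measurableSet_Icc : MeasurableSet (Icc (0:ℝ) 1))]
      with x hfx hx
    have h1 : |f x| ≤ C := by
      rw [abs_le]
      constructor
      · calc -C ≤ -|m| := by simp [hC]
          _ ≤ m := neg_abs_le m
          _ ≤ f x := hfx.1
      · calc f x ≤ M := hfx.2
          _ ≤ |M| := le_abs_self M
          _ ≤ C := le_max_right _ _
    have h2 : |x - c| ≤ 1 + |c| := by
      have := abs_sub_abs_le_abs_sub x c
      have hxa : |x| ≤ 1 := abs_le.mpr ⟨by linarith [hx.1], hx.2⟩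
      have := abs_sub x c
      calc |x - c| ≤ |x| + |c| := abs_sub x c
        _ ≤ 1 + |c| := by linarith
    calc ‖(x-c) * f x‖ = |x - c| * |f x| := abs_mul _ _
      _ ≤ (1 + |c|) * C := by
          apply mul_le_mul h2 h1 (abs_nonneg _) (by positivity)
  have hInt : IntegrableOn (fun x => (x - c) * f x) (Icc (0:ℝ) 1) volume := by
    apply Integrable.mono' (integrable_const ((1 + |c|) * C))
    · exact (((measurable_id.sub measurable_const).mul hmeas)).aestronglyMeasurable
    · exact hCf
  have hII : IntervalIntegrable (fun x => (x - c) * f x) volume 0 1 := by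
    rw [intervalIntegrable_iff_integrableOn_Ioc_of_le (by norm_num)]
    exact hInt.mono_set Ioc_subset_Icc_self
  have hII1 : IntervalIntegrable (fun x => (x - c) * f x) volume 0 c :=
    hII.mono_set (uIcc_subset_uIcc (by simp) (by simp [uIcc_of_le, hc0, hc1]))
  have hII2 : IntervalIntegrable (fun x => (x - c) * f x) volume c 1 :=
    hII.mono_set (uIcc_subset_uIcc (by simp [uIcc_of_le, hc0, hc1]) (by simp))
  have hsplit : ∫ x in (0:ℝ)..1, (x - c) * f x
      = (∫ x in (0:ℝ)..c, (x - c) * f x) + ∫ x in c..(1:ℝ), (x - c) * f x :=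
    (intervalIntegral.integral_add_adjacent_intervals hII1 hII2).symm
  -- bound first piece
  have hb1 : (∫ x in (0:ℝ)..c, (x - c) * f x) ≤ ∫ x in (0:ℝ)..c, (x - c) * m := by
    apply intervalIntegral.integral_mono_ae_restrict hc0 hII1
    · exact ((intervalIntegral.intervalIntegrable_id.sub intervalIntegrable_const).mul_const m)
    · have hsub : Icc (0:ℝ) c ⊆ Icc 0 1 := Icc_subset_Icc le_rfl hc1
      filter_upwards [ae_restrict_of_ae_restrict_of_subset hsub hbound,
        ae_restrict_mem (measurableSet_Icc : MeasurableSet (Icc (0:ℝ) c))] with x hfx hx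
      have : x - c ≤ 0 := by linarith [hx.2]
      exact mul_le_mul_of_nonpos_left hfx.1 this
  have hb2 : (∫ x in c..(1:ℝ), (x - c) * f x) ≤ ∫ x in c..(1:ℝ), (x - c) * M := by
    apply intervalIntegral.integral_mono_ae_restrict hc1 hII2
    · exact ((intervalIntegral.intervalIntegrable_id.sub intervalIntegrable_const).mul_const M)
    · have hsub : Icc c 1 ⊆ Icc (0:ℝ) 1 := Icc_subset_Icc hc0 le_rfl
      filter_upwards [ae_restrict_of_ae_restrict_of_subset hsub hbound,
        ae_restrict_mem (measurableSet_Icc : MeasurableSet (Icc c (1:ℝ)))] with x hfx hx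
      have : 0 ≤ x - c := by linarith [hx.1]
      exact mul_le_mul_of_nonneg_left hfx.2 this
  have hv1 : (∫ x in (0:ℝ)..c, (x - c) * m) = -m * c^2/2 := by
    rw [intervalIntegral.integral_mul_const,
      intervalIntegral.integral_sub intervalIntegral.intervalIntegrable_id intervalIntegrable_const,
      integral_id]
    simp [intervalIntegral.integral_const]
    ring
  have hv2 : (∫ x in c..(1:ℝ), (x - c) * M) = M * (1-c)^2/2 := by
    rw [intervalIntegral.integral_mul_const,
      intervalIntegral.integral_sub intervalIntegral.intervalIntegrable_id intervalIntegrable_const,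
      integral_id]
    simp [intervalIntegral.integral_const]
    ring
  rw [hsplit]
  linarith [hb1, hb2, hv1.le, hv2.le, hv1.ge, hv2.ge]
theorem moment_inequality (m M : ℝ) (hm : m < 0) (hM : 0 < M)
    (f : ℝ → ℝ) (hmeas : Measurable f)
    (hbound : ∀ᵐ x ∂(volume.restrict (Icc (0:ℝ) 1)), f x ∈ Icc m M)
    (hint : ∫ x in (0:ℝ)..1, f x = 0) :
    |∫ x in (0:ℝ)..1, x * f x| ≤ (1 / 2) * (-m * M / (M - m)) := by
  have hD : (0:ℝ) < M - m := by linarith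
  have hD' : M - m ≠ 0 := ne_of_gt hD
  -- integrability
  have hCf : ∀ᵐ x ∂(volume.restrict (Icc (0:ℝ) 1)), ‖f x‖ ≤ max |m| |M| := by
    filter_upwards [hbound] with x hfx
    rw [Real.norm_eq_abs, abs_le]
    refine ⟨?_, ?_⟩
    · calc -(max |m| |M|) ≤ -|m| := by simp
        _ ≤ m := neg_abs_le m
        _ ≤ f x := hfx.1
    · exact hfx.2.trans ((le_abs_self M).trans (le_max_right _ _))
  have hIf : IntervalIntegrable f volume 0 1 := by
    rw [intervalIntegrable_iff_integrableOn_Ioc_of_le (by norm_num)]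
    exact (show IntegrableOn f (Icc 0 1) volume from Integrable.mono'
      (integrable_const (max |m| |M|)) hmeas.aestronglyMeasurable hCf).mono_set
      Ioc_subset_Icc_self
  have hIxf : IntervalIntegrable (fun x => x * f x) volume 0 1 := by
    rw [intervalIntegrable_iff_integrableOn_Ioc_of_le (by norm_num)]
    have hInt : IntegrableOn (fun x => x * f x) (Icc (0:ℝ) 1) volume := by
      apply Integrable.mono' (integrable_const (1 * max |m| |M|))
        ((measurable_id.mul hmeas).aestronglyMeasurable)
      filter_upwards [hCf, ae_restrict_mem (measurableSet_Icc : MeasurableSet (Icc (0:ℝ) 1))]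
        with x h1 hx
      rw [Real.norm_eq_abs, Pi.mul_apply, id_eq, abs_mul]
      apply mul_le_mul (abs_le.mpr ⟨by linarith [hx.1], hx.2⟩) h1 (norm_nonneg _) (by norm_num)
    exact hInt.mono_set Ioc_subset_Icc_self
  have hshift : ∀ c : ℝ, ∫ x in (0:ℝ)..1, (x - c) * f x = ∫ x in (0:ℝ)..1, x * f x := by
    intro c
    have he : ∀ x : ℝ, (x - c) * f x = x * f x - c * f x := fun x => by ring
    simp_rw [he]
    rw [intervalIntegral.integral_sub hIxf (hIf.const_mul c),
      intervalIntegral.integral_const_mul, hint]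
    ring
  -- upper bound
  have hub : ∫ x in (0:ℝ)..1, x * f x ≤ (1 / 2) * (-m * M / (M - m)) := by
    have hc0 : (0:ℝ) ≤ M / (M - m) := div_nonneg hM.le hD.le
    have hc1 : M / (M - m) ≤ 1 := by rw [div_le_one hD]; linarith
    have := mi_key m M (M / (M - m)) f hmeas hbound hc0 hc1
    rw [hshift] at this
    refine this.trans (le_of_eq ?_)
    field_simp
    ring
  -- lower bound
  have hlb : -(1 / 2) * (-m * M / (M - m)) ≤ ∫ x in (0:ℝ)..1, x * f x := by
    have hc0 : (0:ℝ) ≤ -m / (M - m) := div_nonneg (by linarith) hD.le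
    have hc1 : -m / (M - m) ≤ 1 := by rw [div_le_one hD]; linarith
    have hb' : ∀ᵐ x ∂(volume.restrict (Icc (0:ℝ) 1)), -f x ∈ Icc (-M) (-m) := by
      filter_upwards [hbound] with x hfx
      exact ⟨by linarith [hfx.2], by linarith [hfx.1]⟩
    have := mi_key (-M) (-m) (-m / (M - m)) (fun x => -f x) hmeas.neg hb' hc0 hc1
    have hneg : ∫ x in (0:ℝ)..1, (x - (-m / (M - m))) * (-f x)
        = -∫ x in (0:ℝ)..1, x * f x := by
      simp_rw [mul_neg]
      rw [intervalIntegral.integral_neg, hshift]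
    rw [hneg] at this
    have heq : -(-M) * (-m / (M - m))^2/2 + (-m) * (1 - (-m / (M - m)))^2/2
        = (1 / 2) * (-m * M / (M - m)) := by field_simp; ring
    rw [heq] at this
    linarith
  rw [abs_le]
  exact ⟨by linarith, hub⟩
end

section
/- Let m, M be real numbers with m < 0 < M, let φ be a nonnegative monotone increasing function on [0, -mM/(M-m)], let f ∈ F_{m,M}, and let 0 ≤ a < b ≤ 1 be such that J(f)(a) = J(f)(b) = 0 and J(f)(x) ≠ 0 for all x ∈ (a,b). Then ∫ₐᵇ φ(|J(f)(x)|) dx ≤ (b-a) · K(φ, -mM(b-a)/(M-m)), where K(φ,t) = (1/t)∫₀ᵗ φ(x) dx. -/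
open MeasureTheory Set

lemma tent_bound (P Q T₁ : ℝ) (hP : 0 < P) (hQ : 0 < Q) (a b : ℝ) (hab : a < b)
    (φ : ℝ → ℝ) (hφ0 : ∀ x ∈ Icc (0:ℝ) T₁, 0 ≤ φ x) (hφ : MonotoneOn φ (Icc 0 T₁))
    (hT₁ : P * Q * (b - a) / (P + Q) ≤ T₁)
    (g : ℝ → ℝ) (hg0 : ∀ x ∈ Icc a b, 0 ≤ g x)
    (hg1 : ∀ x ∈ Icc a b, g x ≤ P * (x - a)) (hg2 : ∀ x ∈ Icc a b, g x ≤ Q * (b - x)) :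
    (∫ x in a..b, φ (g x)) ≤ (P⁻¹ + Q⁻¹) * ∫ t in (0:ℝ)..(P * Q * (b - a) / (P + Q)), φ t := by
  obtain ⟨T, hTdef⟩ : ∃ T, T = P * Q * (b - a) / (P + Q) := ⟨_, rfl⟩
  rw [← hTdef] at hT₁ ⊢
  have hPQ : 0 < P + Q := by linarith
  have hT : 0 < T := by
    rw [hTdef]
    apply div_pos _ hPQ
    have := mul_pos (mul_pos hP hQ) (sub_pos.mpr hab)
    linarith
  have hT0 : (0:ℝ) ≤ T := hT.le
  have hT₁0 : (0:ℝ) ≤ T₁ := hT0.trans hT₁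
  have hφmono : MonotoneOn φ (uIcc 0 T) := by
    rw [uIcc_of_le hT0]
    exact hφ.mono (Icc_subset_Icc le_rfl hT₁)
  have hφint : IntervalIntegrable φ volume 0 T := hφmono.intervalIntegrable
  have hφnn : (0:ℝ) ≤ ∫ t in (0:ℝ)..T, φ t := by
    apply intervalIntegral.integral_nonneg hT0
    intro u hu
    exact hφ0 u ⟨hu.1, hu.2.trans hT₁⟩
  by_cases hgi : IntervalIntegrable (fun x => φ (g x)) volume a b
  · -- main case
    have hTP : P * (T / P) = T := mul_div_cancel₀ T hP.ne'
    have hTQ : Q * (T / Q) = T := mul_div_cancel₀ T hQ.ne'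
    obtain ⟨c, hcdef⟩ : ∃ c, c = a + T / P := ⟨_, rfl⟩
    have hca : a < c := by
      have h : 0 < T / P := div_pos hT hP
      rw [hcdef]; linarith
    have hcma : c - a = T / P := by rw [hcdef]; ring
    have hcb : c < b := by
      have h1 : T < (b - a) * P := by
        rw [hTdef, div_lt_iff₀ hPQ]
        nlinarith [mul_pos (mul_pos (sub_pos.mpr hab) hP) hP]
      have h2 : T / P < b - a := by
        rw [div_lt_iff₀ hP]; linarith
      rw [hcdef]; linarith
    have hbmc : b - c = T / Q := by
      rw [hcdef, hTdef]
      field_simp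
      ring
    -- integrability of pieces
    have hgi1 : IntervalIntegrable (fun x => φ (g x)) volume a c := by
      apply hgi.mono_set
      rw [uIcc_of_le hca.le, uIcc_of_le hab.le]
      exact Icc_subset_Icc le_rfl hcb.le
    have hgi2 : IntervalIntegrable (fun x => φ (g x)) volume c b := by
      apply hgi.mono_set
      rw [uIcc_of_le hcb.le, uIcc_of_le hab.le]
      exact Icc_subset_Icc hca.le le_rfl
    -- tent pieces are monotone hence integrable
    have hmono1 : MonotoneOn (fun x => φ (P * (x - a))) (uIcc a c) := by
      rw [uIcc_of_le hca.le]
      intro x hx y hy hxy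
      have hyT : P * (y - a) ≤ T := by
        have : y - a ≤ T / P := by have := hy.2; linarith [hcma]
        calc P * (y - a) ≤ P * (T / P) := by
              exact mul_le_mul_of_nonneg_left this hP.le
          _ = T := hTP
      have hx' : P * (x - a) ∈ Icc (0:ℝ) T₁ := by
        constructor
        · have := hx.1; nlinarith
        · have : P * (x - a) ≤ P * (y - a) := by nlinarith
          linarith [hyT]
      have hy' : P * (y - a) ∈ Icc (0:ℝ) T₁ := by
        constructor
        · have := hy.1; nlinarith
        · linarith [hyT]
      exact hφ hx' hy' (by nlinarith)
    have hanti2 : AntitoneOn (fun x => φ (Q * (b - x))) (uIcc c b) := by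
      rw [uIcc_of_le hcb.le]
      intro x hx y hy hxy
      have hxT : Q * (b - x) ≤ T := by
        have : b - x ≤ T / Q := by have := hx.1; linarith [hbmc]
        calc Q * (b - x) ≤ Q * (T / Q) := mul_le_mul_of_nonneg_left this hQ.le
          _ = T := hTQ
      have hx' : Q * (b - x) ∈ Icc (0:ℝ) T₁ := by
        constructor
        · have := hx.2; nlinarith
        · linarith [hxT]
      have hy' : Q * (b - y) ∈ Icc (0:ℝ) T₁ := by
        constructor
        · have := hy.2; nlinarith
        · have : Q * (b - y) ≤ Q * (b - x) := by nlinarith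
          linarith [hxT]
      exact hφ hy' hx' (by nlinarith)
    have hti1 : IntervalIntegrable (fun x => φ (P * (x - a))) volume a c :=
      hmono1.intervalIntegrable
    have hti2 : IntervalIntegrable (fun x => φ (Q * (b - x))) volume c b :=
      hanti2.intervalIntegrable
    -- split the integral
    have hsplit : (∫ x in a..b, φ (g x))
        = (∫ x in a..c, φ (g x)) + ∫ x in c..b, φ (g x) :=
      (intervalIntegral.integral_add_adjacent_intervals hgi1 hgi2).symm
    -- bound on [a, c]
    have hb1 : (∫ x in a..c, φ (g x)) ≤ ∫ x in a..c, φ (P * (x - a)) := by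
      apply intervalIntegral.integral_mono_on hca.le hgi1 hti1
      intro x hx
      have hxab : x ∈ Icc a b := ⟨hx.1, hx.2.trans hcb.le⟩
      have h1 : g x ≤ P * (x - a) := hg1 x hxab
      have h2 : P * (x - a) ≤ T := by
        have : x - a ≤ T / P := by have := hx.2; linarith [hcma]
        calc P * (x - a) ≤ P * (T / P) := mul_le_mul_of_nonneg_left this hP.le
          _ = T := hTP
      exact hφ ⟨hg0 x hxab, by linarith⟩ ⟨by nlinarith [hx.1], by linarith⟩ h1
    -- bound on [c, b]
    have hb2 : (∫ x in c..b, φ (g x)) ≤ ∫ x in c..b, φ (Q * (b - x)) := by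
      apply intervalIntegral.integral_mono_on hcb.le hgi2 hti2
      intro x hx
      have hxab : x ∈ Icc a b := ⟨hca.le.trans hx.1, hx.2⟩
      have h1 : g x ≤ Q * (b - x) := hg2 x hxab
      have h2 : Q * (b - x) ≤ T := by
        have : b - x ≤ T / Q := by have := hx.1; linarith [hbmc]
        calc Q * (b - x) ≤ Q * (T / Q) := mul_le_mul_of_nonneg_left this hQ.le
          _ = T := hTQ
      exact hφ ⟨hg0 x hxab, by linarith⟩ ⟨by nlinarith [hx.2], by linarith⟩ h1
    -- evaluate tent integrals
    have he1 : (∫ x in a..c, φ (P * (x - a))) = P⁻¹ * ∫ t in (0:ℝ)..T, φ t := by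
      have h1 : (∫ x in a..c, φ (P * (x - a)))
          = ∫ x in a - a..c - a, φ (P * x) :=
        intervalIntegral.integral_comp_sub_right (fun x => φ (P * x)) a
      have h2 : (∫ x in a - a..c - a, φ (P * x))
          = P⁻¹ • ∫ x in P * (a - a)..P * (c - a), φ x :=
        intervalIntegral.integral_comp_mul_left φ hP.ne'
      rw [h1, h2, sub_self, mul_zero, hcma, hTP, smul_eq_mul]
    have he2 : (∫ x in c..b, φ (Q * (b - x))) = Q⁻¹ * ∫ t in (0:ℝ)..T, φ t := by
      have h1 : (∫ x in c..b, φ (Q * (b - x)))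
          = ∫ x in b - b..b - c, φ (Q * x) :=
        intervalIntegral.integral_comp_sub_left (fun x => φ (Q * x)) b
      have h2 : (∫ x in b - b..b - c, φ (Q * x))
          = Q⁻¹ • ∫ x in Q * (b - b)..Q * (b - c), φ x :=
        intervalIntegral.integral_comp_mul_left φ hQ.ne'
      rw [h1, h2, sub_self, mul_zero, hbmc, hTQ, smul_eq_mul]
    calc (∫ x in a..b, φ (g x))
        = (∫ x in a..c, φ (g x)) + ∫ x in c..b, φ (g x) := hsplit
      _ ≤ (∫ x in a..c, φ (P * (x - a))) + ∫ x in c..b, φ (Q * (b - x)) :=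
          add_le_add hb1 hb2
      _ = (P⁻¹ + Q⁻¹) * ∫ t in (0:ℝ)..T, φ t := by rw [he1, he2]; ring
  · rw [intervalIntegral.integral_undef hgi]
    have h : 0 ≤ P⁻¹ + Q⁻¹ := by positivity
    exact mul_nonneg h hφnn

theorem interval_integral_bound (m M : ℝ) (hm : m < 0) (hM : 0 < M)
    (φ : ℝ → ℝ)
    (hφ0 : ∀ x ∈ Icc (0:ℝ) (-m * M / (M - m)), 0 ≤ φ x)
    (hφ : MonotoneOn φ (Icc 0 (-m * M / (M - m))))
    (f : ℝ → ℝ) (hmeas : Measurable f)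
    (hbound : ∀ᵐ x ∂(volume.restrict (Icc (0:ℝ) 1)), f x ∈ Icc m M)
    (hint : ∫ x in (0:ℝ)..1, f x = 0)
    (a b : ℝ) (ha : 0 ≤ a) (hab : a < b) (hb : b ≤ 1)
    (hJa : ∫ t in (0:ℝ)..a, f t = 0) (hJb : ∫ t in (0:ℝ)..b, f t = 0)
    (hJne : ∀ x ∈ Ioo a b, (∫ t in (0:ℝ)..x, f t) ≠ 0) :
    (∫ x in a..b, φ |∫ t in (0:ℝ)..x, f t|) ≤
      (b - a) * ((1 / (-m * M * (b - a) / (M - m))) *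
        ∫ t in (0:ℝ)..(-m * M * (b - a) / (M - m)), φ t) := by
  have hm' : (0:ℝ) < -m := neg_pos.mpr hm
  have hMm : (0:ℝ) < M - m := by linarith
  have hba : (0:ℝ) < b - a := sub_pos.mpr hab
  have hba1 : b - a ≤ 1 := by linarith
  -- integrability of f
  have hfi : IntegrableOn f (Icc (0:ℝ) 1) volume := by
    refine Integrable.mono' (integrable_const (max (-m) M)) hmeas.aestronglyMeasurable ?_
    filter_upwards [hbound] with x hx
    rw [Real.norm_eq_abs, abs_le]
    constructor
    · have := hx.1; have h2 : -m ≤ max (-m) M := le_max_left _ _; linarith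
    · exact hx.2.trans (le_max_right _ _)
  have hii : ∀ x y : ℝ, x ∈ Icc (0:ℝ) 1 → y ∈ Icc (0:ℝ) 1 →
      IntervalIntegrable f volume x y := fun x y hx hy =>
    (hfi.mono_set (uIcc_subset_Icc hx hy)).intervalIntegrable
  -- step bounds
  have hup : ∀ x y : ℝ, x ∈ Icc (0:ℝ) 1 → y ∈ Icc (0:ℝ) 1 → x ≤ y →
      (∫ t in x..y, f t) ≤ M * (y - x) := by
    intro x y hx hy hxy
    have hae : f ≤ᵐ[volume.restrict (Icc x y)] (fun _ => M) := by
      have hsub : Icc x y ⊆ Icc (0:ℝ) 1 := Icc_subset_Icc hx.1 hy.2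
      filter_upwards [ae_restrict_of_ae_restrict_of_subset hsub hbound] with t ht
      exact ht.2
    have h := intervalIntegral.integral_mono_ae_restrict hxy (hii x y hx hy)
      (intervalIntegrable_const) hae
    rwa [intervalIntegral.integral_const, smul_eq_mul, mul_comm] at h
  have hlo : ∀ x y : ℝ, x ∈ Icc (0:ℝ) 1 → y ∈ Icc (0:ℝ) 1 → x ≤ y →
      m * (y - x) ≤ ∫ t in x..y, f t := by
    intro x y hx hy hxy
    have hae : (fun _ => m) ≤ᵐ[volume.restrict (Icc x y)] f := by
      have hsub : Icc x y ⊆ Icc (0:ℝ) 1 := Icc_subset_Icc hx.1 hy.2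
      filter_upwards [ae_restrict_of_ae_restrict_of_subset hsub hbound] with t ht
      exact ht.1
    have h := intervalIntegral.integral_mono_ae_restrict hxy
      (intervalIntegrable_const) (hii x y hx hy) hae
    rwa [intervalIntegral.integral_const, smul_eq_mul, mul_comm] at h
  -- membership helpers
  have hmem : ∀ x : ℝ, x ∈ Icc a b → x ∈ Icc (0:ℝ) 1 := by
    intro x hx; exact ⟨ha.trans hx.1, hx.2.trans hb⟩
  have hamem : a ∈ Icc (0:ℝ) 1 := ⟨ha, by linarith⟩
  have hbmem : b ∈ Icc (0:ℝ) 1 := ⟨by linarith, hb⟩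
  -- additivity: J x = ∫ a..x for x in [a,b], via J a = 0
  have hJax : ∀ x : ℝ, x ∈ Icc a b → (∫ t in (0:ℝ)..x, f t) = ∫ t in a..x, f t := by
    intro x hx
    have := intervalIntegral.integral_add_adjacent_intervals
      (hii 0 a ⟨le_refl 0, zero_le_one⟩ hamem) (hii a x hamem (hmem x hx))
    rw [hJa] at this; linarith [this]
  have hJxb : ∀ x : ℝ, x ∈ Icc a b → (∫ t in (0:ℝ)..x, f t) = - ∫ t in x..b, f t := by
    intro x hx
    have := intervalIntegral.integral_add_adjacent_intervals
      (hii 0 x ⟨le_refl 0, zero_le_one⟩ (hmem x hx)) (hii x b (hmem x hx) hbmem)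
    rw [hJb] at this; linarith [this]
  -- four pointwise bounds on J over [a,b]
  have hJub1 : ∀ x ∈ Icc a b, (∫ t in (0:ℝ)..x, f t) ≤ M * (x - a) := by
    intro x hx
    rw [hJax x hx]
    exact hup a x hamem (hmem x hx) hx.1
  have hJub2 : ∀ x ∈ Icc a b, (∫ t in (0:ℝ)..x, f t) ≤ -m * (b - x) := by
    intro x hx
    rw [hJxb x hx]
    have := hlo x b (hmem x hx) hbmem hx.2
    linarith
  have hJlb1 : ∀ x ∈ Icc a b, -(∫ t in (0:ℝ)..x, f t) ≤ -m * (x - a) := by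
    intro x hx
    rw [hJax x hx]
    have := hlo a x hamem (hmem x hx) hx.1
    linarith
  have hJlb2 : ∀ x ∈ Icc a b, -(∫ t in (0:ℝ)..x, f t) ≤ M * (b - x) := by
    intro x hx
    rw [hJxb x hx]
    have := hup x b (hmem x hx) hbmem hx.2
    linarith
  -- continuity of J on [0,1]
  have hJcont : ContinuousOn (fun x => ∫ t in (0:ℝ)..x, f t) (Icc (0:ℝ) 1) := by
    have h0 : (0:ℝ) ∈ uIcc (0:ℝ) 1 := left_mem_uIcc
    have := intervalIntegral.continuousOn_primitive_interval'
      (hii 0 1 ⟨le_refl 0, zero_le_one⟩ ⟨zero_le_one, le_refl 1⟩) h0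
    rwa [uIcc_of_le zero_le_one] at this
  -- sign dichotomy
  have hsign : (∀ x ∈ Ioo a b, 0 < ∫ t in (0:ℝ)..x, f t) ∨
      (∀ x ∈ Ioo a b, (∫ t in (0:ℝ)..x, f t) < 0) := by
    by_contra hcon
    push_neg at hcon
    obtain ⟨⟨x₀, hx₀, hx₀'⟩, ⟨x₁, hx₁, hx₁'⟩⟩ := hcon
    have hx₀neg : (∫ t in (0:ℝ)..x₀, f t) < 0 :=
      lt_of_le_of_ne hx₀' (hJne x₀ hx₀)
    have hx₁pos : 0 < ∫ t in (0:ℝ)..x₁, f t :=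
      lt_of_le_of_ne hx₁' (Ne.symm (hJne x₁ hx₁))
    have hIoosub : uIcc x₀ x₁ ⊆ Ioo a b :=
      Set.ordConnected_Ioo.uIcc_subset hx₀ hx₁
    have hcnt : ContinuousOn (fun x => ∫ t in (0:ℝ)..x, f t) (uIcc x₀ x₁) := by
      apply hJcont.mono
      intro z hz
      exact hmem z (Ioo_subset_Icc_self (hIoosub hz))
    have h0mem : (0:ℝ) ∈ uIcc ((∫ t in (0:ℝ)..x₀, f t)) ((∫ t in (0:ℝ)..x₁, f t)) := by
      rw [uIcc_of_le (by linarith)]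
      exact ⟨hx₀neg.le, hx₁pos.le⟩
    obtain ⟨z, hz, hz0⟩ := intermediate_value_uIcc hcnt h0mem
    exact hJne z (hIoosub hz) hz0
  -- the common T value and scalar identity
  have hTeq1 : M * (-m) * (b - a) / (M + -m) = -m * M * (b - a) / (M - m) := by
    rw [sub_eq_add_neg]; ring_nf
  have hTeq2 : (-m) * M * (b - a) / (-m + M) = -m * M * (b - a) / (M - m) := by
    rw [sub_eq_add_neg]; ring_nf
  have hT₁le : -m * M * (b - a) / (M - m) ≤ -m * M / (M - m) := by
    rw [div_le_div_iff₀ hMm hMm]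
    nlinarith [mul_nonneg (mul_nonneg (mul_pos hm' hM).le hMm.le)
      (by linarith : (0:ℝ) ≤ 1 - (b - a))]
  have hscal : M⁻¹ + (-m)⁻¹ = (b - a) * (1 / (-m * M * (b - a) / (M - m))) := by
    have h1 : M ≠ 0 := hM.ne'
    have h2 : m ≠ 0 := hm.ne
    have h3 : b - a ≠ 0 := hba.ne'
    have h4 : M - m ≠ 0 := hMm.ne'
    field_simp
    ring_nf
  rcases hsign with hpos | hneg
  · -- positive case: P = M, Q = -m
    have h0le : ∀ x ∈ Icc a b, 0 ≤ ∫ t in (0:ℝ)..x, f t := by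
      intro x hx
      rcases eq_or_lt_of_le hx.1 with h | h
      · rw [← h, hJa]
      rcases eq_or_lt_of_le hx.2 with h' | h'
      · rw [h', hJb]
      · exact (hpos x ⟨h, h'⟩).le
    have habs : ∀ x ∈ Icc a b, |∫ t in (0:ℝ)..x, f t| = ∫ t in (0:ℝ)..x, f t :=
      fun x hx => abs_of_nonneg (h0le x hx)
    have := tent_bound M (-m) (-m * M / (M - m)) hM hm' a b hab φ hφ0 hφ
      (by rw [hTeq1]; exact hT₁le)
      (fun x => |∫ t in (0:ℝ)..x, f t|)
      (fun x _ => abs_nonneg _)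
      (fun x hx => by
        show |∫ t in (0:ℝ)..x, f t| ≤ M * (x - a)
        rw [habs x hx]; exact hJub1 x hx)
      (fun x hx => by
        show |∫ t in (0:ℝ)..x, f t| ≤ -m * (b - x)
        rw [habs x hx]; exact hJub2 x hx)
    rw [hTeq1] at this
    calc (∫ x in a..b, φ |∫ t in (0:ℝ)..x, f t|)
        ≤ (M⁻¹ + (-m)⁻¹) * ∫ t in (0:ℝ)..(-m * M * (b - a) / (M - m)), φ t := this
      _ = (b - a) * ((1 / (-m * M * (b - a) / (M - m))) *
            ∫ t in (0:ℝ)..(-m * M * (b - a) / (M - m)), φ t) := by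
          rw [hscal]; ring
  · -- negative case: P = -m, Q = M
    have h0ge : ∀ x ∈ Icc a b, (∫ t in (0:ℝ)..x, f t) ≤ 0 := by
      intro x hx
      rcases eq_or_lt_of_le hx.1 with h | h
      · rw [← h, hJa]
      rcases eq_or_lt_of_le hx.2 with h' | h'
      · rw [h', hJb]
      · exact (hneg x ⟨h, h'⟩).le
    have habs : ∀ x ∈ Icc a b, |∫ t in (0:ℝ)..x, f t| = -(∫ t in (0:ℝ)..x, f t) :=
      fun x hx => abs_of_nonpos (h0ge x hx)
    have := tent_bound (-m) M (-m * M / (M - m)) hm' hM a b hab φ hφ0 hφ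
      (by rw [hTeq2]; exact hT₁le)
      (fun x => |∫ t in (0:ℝ)..x, f t|)
      (fun x _ => abs_nonneg _)
      (fun x hx => by
        show |∫ t in (0:ℝ)..x, f t| ≤ -m * (x - a)
        rw [habs x hx]; exact hJlb1 x hx)
      (fun x hx => by
        show |∫ t in (0:ℝ)..x, f t| ≤ M * (b - x)
        rw [habs x hx]; exact hJlb2 x hx)
    rw [hTeq2] at this
    calc (∫ x in a..b, φ |∫ t in (0:ℝ)..x, f t|)
        ≤ ((-m)⁻¹ + M⁻¹) * ∫ t in (0:ℝ)..(-m * M * (b - a) / (M - m)), φ t := this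
      _ = (b - a) * ((1 / (-m * M * (b - a) / (M - m))) *
            ∫ t in (0:ℝ)..(-m * M * (b - a) / (M - m)), φ t) := by
          rw [add_comm, hscal]; ring
end

section
/- Let 0 < a < b, let m, M be real numbers with m < 0 < M, and let φ be a nonnegative monotone increasing function on [0, -mM(b-a)/(M-m)]. Then ∫ₐᵇ φ(min(M(x-a), m(x-b))) dx = (1/M)∫₀^{-mM(b-a)/(M-m)} φ(t) dt + (1/(-m))∫₀^{-mM(b-a)/(M-m)} φ(t) dt = (b-a) · K(φ, -mM(b-a)/(M-m)), where K(φ,t) = (1/t)∫₀ᵗ φ(x) dx. -/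
open MeasureTheory Set

theorem extremal_integral_computation (a b m M : ℝ) (ha : 0 < a) (hab : a < b)
    (hm : m < 0) (hM : 0 < M) (φ : ℝ → ℝ)
    (hφ0 : ∀ x ∈ Icc (0:ℝ) (-m * M * (b - a) / (M - m)), 0 ≤ φ x)
    (hφ : MonotoneOn φ (Icc 0 (-m * M * (b - a) / (M - m)))) :
    ((∫ x in a..b, φ (min (M * (x - a)) (m * (x - b)))) =
      (1 / M) * (∫ t in (0:ℝ)..(-m * M * (b - a) / (M - m)), φ t) +
      (1 / (-m)) * (∫ t in (0:ℝ)..(-m * M * (b - a) / (M - m)), φ t)) ∧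
    ((1 / M) * (∫ t in (0:ℝ)..(-m * M * (b - a) / (M - m)), φ t) +
      (1 / (-m)) * (∫ t in (0:ℝ)..(-m * M * (b - a) / (M - m)), φ t) =
      (b - a) * ((1 / (-m * M * (b - a) / (M - m))) *
        ∫ t in (0:ℝ)..(-m * M * (b - a) / (M - m)), φ t)) := by
  set c : ℝ := -m * M * (b - a) / (M - m) with hc_def
  set x₀ : ℝ := (M * a - m * b) / (M - m) with hx0_def
  have hMm : (0:ℝ) < M - m := by linarith
  have hMne : M ≠ 0 := ne_of_gt hM
  have hmne : m ≠ 0 := ne_of_lt hm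
  have hba : (0:ℝ) < b - a := by linarith
  have hc_pos : 0 < c := by
    rw [hc_def]; exact div_pos (mul_pos (mul_pos (neg_pos.2 hm) hM) hba) hMm
  have hax0 : a < x₀ := by
    rw [hx0_def, lt_div_iff₀ hMm]; nlinarith
  have hx0b : x₀ < b := by
    rw [hx0_def, div_lt_iff₀ hMm]; nlinarith
  have hMx0 : M * (x₀ - a) = c := by
    rw [hx0_def, hc_def]; field_simp; ring
  have hmx0 : m * (x₀ - b) = c := by
    rw [hx0_def, hc_def]; field_simp; ring
  -- equality of the min with each branch on the two subintervals
  have hEq1 : EqOn (fun x => φ (min (M * (x - a)) (m * (x - b))))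
      (fun x => φ (M * (x - a))) (Icc a x₀) := by
    intro x hx
    simp only
    congr 1
    apply min_eq_left
    nlinarith [hx.1, hx.2, hMx0, hmx0]
  have hEq2 : EqOn (fun x => φ (min (M * (x - a)) (m * (x - b))))
      (fun x => φ (m * (x - b))) (Icc x₀ b) := by
    intro x hx
    simp only
    congr 1
    apply min_eq_right
    nlinarith [hx.1, hx.2, hMx0, hmx0]
  -- monotone pieces
  have hmem1 : ∀ x ∈ Icc a x₀, M * (x - a) ∈ Icc (0:ℝ) c := by
    intro x hx
    constructor
    · nlinarith [hx.1]
    · nlinarith [hx.2, hMx0]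
  have hmem2 : ∀ x ∈ Icc x₀ b, m * (x - b) ∈ Icc (0:ℝ) c := by
    intro x hx
    constructor
    · nlinarith [hx.2]
    · nlinarith [hx.1, hmx0]
  have hmono1 : MonotoneOn (fun x => φ (M * (x - a))) (Icc a x₀) := by
    intro x hx y hy hxy
    exact hφ (hmem1 x hx) (hmem1 y hy) (by nlinarith)
  have hanti2 : AntitoneOn (fun x => φ (m * (x - b))) (Icc x₀ b) := by
    intro x hx y hy hxy
    exact hφ (hmem2 y hy) (hmem2 x hx) (by nlinarith)
  -- integrability of the min function on both pieces
  have hint1 : IntervalIntegrable (fun x => φ (min (M * (x - a)) (m * (x - b))))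
      volume a x₀ := by
    have h := (hmono1.mono (uIcc_of_le hax0.le).subset).intervalIntegrable (μ := volume)
    exact h.congr <| by
      intro x hx
      exact (hEq1 (Ioc_subset_Icc_self ((uIoc_of_le hax0.le) ▸ hx))).symm
  have hint2 : IntervalIntegrable (fun x => φ (min (M * (x - a)) (m * (x - b))))
      volume x₀ b := by
    have h := (hanti2.mono (uIcc_of_le hx0b.le).subset).intervalIntegrable (μ := volume)
    exact h.congr <| by
      intro x hx
      exact (hEq2 (Ioc_subset_Icc_self ((uIoc_of_le hx0b.le) ▸ hx))).symm
  -- compute the two pieces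
  have key1 : (∫ x in a..x₀, φ (M * (x - a))) = (1 / M) * ∫ t in (0:ℝ)..c, φ t := by
    have h : ∀ x : ℝ, M * (x - a) = M * x + -(M * a) := fun x => by ring
    simp only [h]
    rw [intervalIntegral.integral_comp_mul_add φ hMne (-(M * a))]
    have e1 : M * a + -(M * a) = 0 := by ring
    have e2 : M * x₀ + -(M * a) = c := by rw [← hMx0]; ring
    rw [e1, e2, smul_eq_mul, one_div]
  have key2 : (∫ x in x₀..b, φ (m * (x - b))) = (1 / (-m)) * ∫ t in (0:ℝ)..c, φ t := by
    have h : ∀ x : ℝ, m * (x - b) = m * x + -(m * b) := fun x => by ring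
    simp only [h]
    rw [intervalIntegral.integral_comp_mul_add φ hmne (-(m * b))]
    have e1 : m * b + -(m * b) = 0 := by ring
    have e2 : m * x₀ + -(m * b) = c := by rw [← hmx0]; ring
    rw [e1, e2, smul_eq_mul, intervalIntegral.integral_symm]
    rw [one_div, inv_neg]
    ring
  constructor
  · rw [← intervalIntegral.integral_add_adjacent_intervals hint1 hint2,
      intervalIntegral.integral_congr (hEq1.mono (uIcc_of_le hax0.le).subset),
      intervalIntegral.integral_congr (hEq2.mono (uIcc_of_le hx0b.le).subset),
      key1, key2]
  · have h : (b - a) * (1 / c) = 1 / M + 1 / (-m) := by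
      rw [hc_def]
      field_simp [hMne, hmne, hMm.ne', hba.ne']
      ring
    rw [← mul_assoc, h]
    ring
end
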